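/- arXiv:2106.11257 — 6 statements merged into one kernel-verified Lean document; each statement's English description precedes it below -/
import Mathlib

section
/- Let M, N be positive integers with N ≥ 0.7·M and M ≤ 16N/9. Let g_1, …, g_N be independent random vectors in ℝ^s with common mean μ, let ḡ = (1/N)·∑_{j=1}^N g_j, and let a, b, p₀ > 0 be such that P(‖ḡ − μ‖ > a) ≤ p₀ and P(‖g_j − μ‖ > b) ≤ 1/9 for every j. Then the probability that fewer than M/2 indices j ∈ {1, …, N} satisfy ‖g_j − ḡ‖ ≤ a + b is at most p₀ + exp(−2N·(8/9 − M/(2N))²). -/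
/-!
Off the event `‖ḡ - μ‖ > a`, the triangle inequality puts every `g j` with `‖g j - μ‖ ≤ b`
within `a + b` of `ḡ`, so a false alarm forces either that event or at most `M / 2` of the
independent indicators `1{‖g j - μ‖ ≤ b}` to fire. These have means at least `8 / 9`, and
Hoeffding's inequality bounds the second probability by `exp (-2N (8/9 - M/(2N))²)`.
-/

open MeasureTheory ProbabilityTheory Real

theorem measureReal_sum_le_le_of_iIndepFun_mem_Icc {Ω ι : Type*} [MeasurableSpace Ω]
    {μ : Measure Ω} [Fintype ι] {X : ι → Ω → ℝ}
    (hindep : iIndepFun X μ) (hmeas : ∀ i, AEMeasurable (X i) μ)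
    (hX : ∀ i ω, X i ω ∈ Set.Icc (0 : ℝ) 1) {p t : ℝ} (hp : ∀ i, p ≤ μ[X i])
    (ht : t ≤ Fintype.card ι * p) :
    μ.real {ω | ∑ i, X i ω ≤ t} ≤ exp (-2 * (Fintype.card ι * p - t) ^ 2 / Fintype.card ι) := by
  have := hindep.isProbabilityMeasure
  set Y : ι → Ω → ℝ := fun i ω ↦ μ[X i] - X i ω
  have hY_indep : iIndepFun Y μ :=
    (hindep.comp (fun i y ↦ μ[X i] - y) fun _ ↦ measurable_id.const_sub _ :)
  have hY_subG : ∀ i ∈ Finset.univ, HasSubgaussianMGF (Y i) ((1 / 2) ^ 2) μ := by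
    intro i _
    have hint : Integrable (X i) μ := Integrable.of_mem_Icc 0 1 (hmeas i) (ae_of_all _ (hX i))
    have := hasSubgaussianMGF_of_mem_Icc_of_integral_eq_zero (μ := μ) (X := Y i)
      (a := μ[X i] - 1) (b := μ[X i]) ((hmeas i).const_sub _)
      (ae_of_all _ fun ω ↦ ⟨by linarith [(hX i ω).2], by linarith [(hX i ω).1]⟩)
      (by simp [Y, integral_sub (integrable_const _) hint])
    simpa using this
  have hsub : {ω | ∑ i, X i ω ≤ t} ⊆ {ω | Fintype.card ι * p - t ≤ ∑ i, Y i ω} := by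
    intro ω hω
    have : Fintype.card ι * p ≤ ∑ i, μ[X i] := by
      simpa using Finset.card_nsmul_le_sum Finset.univ (fun i ↦ μ[X i]) p (fun i _ ↦ hp i)
    simp only [Y, Finset.sum_sub_distrib, Set.mem_ofPred_eq] at hω ⊢
    linarith
  calc μ.real {ω | ∑ i, X i ω ≤ t}
      ≤ μ.real {ω | Fintype.card ι * p - t ≤ ∑ i, Y i ω} := measureReal_mono hsub
    _ ≤ exp (-(Fintype.card ι * p - t) ^ 2 / (2 * ∑ i : ι, ((1 / 2) ^ 2 : NNReal))) :=
      HasSubgaussianMGF.measure_sum_ge_le_of_iIndepFun hY_indep hY_subG (by linarith)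
    _ = exp (-2 * (Fintype.card ι * p - t) ^ 2 / Fintype.card ι) := by
      congr 1
      simp only [Finset.sum_const, Finset.card_univ, nsmul_eq_mul]
      push_cast
      ring

theorem measureReal_ncard_le_le_of_iIndepFun {Ω ι β : Type*} [MeasurableSpace Ω]
    [MeasurableSpace β] {μ : Measure Ω} [Fintype ι] {g : ι → Ω → β}
    (hindep : iIndepFun g μ) (hmeas : ∀ i, Measurable (g i)) {S : Set β} (hS : MeasurableSet S)
    {p t : ℝ} (hp : ∀ i, p ≤ μ.real (g i ⁻¹' S)) (ht : t ≤ Fintype.card ι * p) :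
    μ.real {ω | ({i | g i ω ∈ S}.ncard : ℝ) ≤ t}
      ≤ exp (-2 * (Fintype.card ι * p - t) ^ 2 / Fintype.card ι) := by
  classical
  have hcount : ∀ ω, ∑ i, S.indicator 1 (g i ω) = ({i | g i ω ∈ S}.ncard : ℝ) := fun ω ↦ by
    simp [Set.indicator_apply, Finset.sum_boole, Set.ncard_eq_toFinset_card']
  have hmean : ∀ i, μ.real (g i ⁻¹' S) = μ[fun ω ↦ S.indicator 1 (g i ω)] := fun i ↦ by
    rw [← integral_indicator_one (hmeas i hS)]
    rfl
  simp only [← hcount]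
  refine measureReal_sum_le_le_of_iIndepFun_mem_Icc
    (hindep.comp (fun _ ↦ S.indicator 1) fun _ ↦ measurable_const.indicator hS)
    (fun i ↦ ((measurable_const.indicator hS).comp (hmeas i)).aemeasurable)
    (fun i ω ↦ ?_) (fun i ↦ hmean i ▸ hp i) ht
  exact ⟨Set.indicator_nonneg (fun _ _ ↦ zero_le_one) _,
    Set.indicator_le_self' (fun _ _ ↦ zero_le_one) _⟩

theorem ncard_norm_sub_le_le_ncard_norm_sub_le_add {ι E : Type*} [Finite ι]
    [SeminormedAddCommGroup E] (x : ι → E) {c m : E} {a b : ℝ} (hm : ‖m - c‖ ≤ a) :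
    {i | ‖x i - c‖ ≤ b}.ncard ≤ {i | ‖x i - m‖ ≤ a + b}.ncard := by
  refine Set.ncard_le_ncard (fun i hi ↦ ?_) (Set.toFinite _)
  simp only [Set.mem_ofPred_eq, ← dist_eq_norm] at hi hm ⊢
  linarith [dist_triangle_right (x i) m c]

theorem verification3_false_alarm_general
    {Ω : Type*} [MeasurableSpace Ω] (P : Measure Ω) [IsProbabilityMeasure P]
    {s : ℕ} (M N : ℕ) (hN : 0 < N)
    (hMN : (M : ℝ) ≤ 16 * N / 9)
    (g : Fin N → Ω → EuclideanSpace ℝ (Fin s)) (μvec : EuclideanSpace ℝ (Fin s))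
    (a b p₀ : ℝ) (hp₀ : 0 < p₀)
    (hmeas : ∀ j, Measurable (g j))
    (hindep : iIndepFun g P)
    (hbar : P {ω | a < ‖(N : ℝ)⁻¹ • (∑ j : Fin N, g j ω) - μvec‖} ≤ ENNReal.ofReal p₀)
    (heach : ∀ j, P {ω | b < ‖g j ω - μvec‖} ≤ ENNReal.ofReal (1 / 9)) :
    P {ω | ((Set.ncard {j : Fin N | ‖g j ω - (N : ℝ)⁻¹ • (∑ i : Fin N, g i ω)‖ ≤ a + b} : ℝ)
        < (M : ℝ) / 2)}
      ≤ ENNReal.ofReal (p₀ + Real.exp (-2 * N * (8 / 9 - M / (2 * N)) ^ 2)) := by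
  set ball := Metric.closedBall μvec b
  have hclose : ∀ j, 8 / 9 ≤ P.real (g j ⁻¹' ball) := fun j ↦ by
    have hfar : P.real (g j ⁻¹' ball)ᶜ ≤ 1 / 9 := by
      refine ENNReal.toReal_le_of_le_ofReal (by norm_num) (le_of_eq_of_le ?_ (heach j))
      congr 1; ext ω; simp [ball, dist_eq_norm]
    rw [probReal_compl_eq_one_sub (hmeas j Metric.isClosed_closedBall.measurableSet)] at hfar
    linarith
  have hcount := measureReal_ncard_le_le_of_iIndepFun hindep hmeas
    Metric.isClosed_closedBall.measurableSet hclose (t := M / 2)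
    (by rw [Fintype.card_fin]; linarith)
  have hsub :
      {ω | ((Set.ncard {j : Fin N | ‖g j ω - (N : ℝ)⁻¹ • (∑ i : Fin N, g i ω)‖ ≤ a + b} : ℝ)
        < (M : ℝ) / 2)} ⊆ {ω | a < ‖(N : ℝ)⁻¹ • (∑ j : Fin N, g j ω) - μvec‖} ∪
          {ω | ({j | g j ω ∈ ball}.ncard : ℝ) ≤ M / 2} := by
    intro ω hω
    rw [Set.mem_union, or_iff_not_imp_left]
    intro hmean_far
    have hle := ncard_norm_sub_le_le_ncard_norm_sub_le_add (fun j ↦ g j ω) (b := b)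
      (not_lt.mp hmean_far)
    simp only [ball, Set.mem_ofPred_eq, Metric.mem_closedBall, dist_eq_norm] at hω ⊢
    exact le_trans (by exact_mod_cast hle) hω.le
  calc _ ≤ _ := measure_mono hsub
    _ ≤ _ := measure_union_le _ _
    _ ≤ ENNReal.ofReal p₀ + ENNReal.ofReal (Real.exp (-2 * N * (8 / 9 - M / (2 * N)) ^ 2)) := by
      refine add_le_add hbar ?_
      rw [← ofReal_measureReal]
      refine ENNReal.ofReal_le_ofReal (hcount.trans_eq ?_)
      simp only [Fintype.card_fin]
      field_simp
    _ = _ := (ENNReal.ofReal_add hp₀.le (Real.exp_pos _).le).symm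

/-- False-alarm bound for Verification 3 of BTARD: if
`P(‖ḡ − μ‖ > a) ≤ p₀` and each `P(‖g_j − μ‖ > b) ≤ 1/9`, then the probability that fewer than
`M/2` of the indices `j` satisfy `‖g_j − ḡ‖ ≤ a + b` is at most
`p₀ + exp(−2N·(8/9 − M/(2N))²)`. -/
theorem verification3_false_alarm
    {Ω : Type*} [MeasurableSpace Ω] (P : Measure Ω) [IsProbabilityMeasure P]
    {s : ℕ} (M N : ℕ) (hM : 0 < M) (hN : 0 < N)
    (hNM : (0.7 : ℝ) * M ≤ N) (hMN : (M : ℝ) ≤ 16 * N / 9)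
    (g : Fin N → Ω → EuclideanSpace ℝ (Fin s)) (μvec : EuclideanSpace ℝ (Fin s))
    (a b p₀ : ℝ) (ha : 0 < a) (hb : 0 < b) (hp₀ : 0 < p₀)
    (hmeas : ∀ j, Measurable (g j))
    (hindep : iIndepFun g P)
    (hint : ∀ j, Integrable (g j) P)
    (hmean : ∀ j, ∫ ω, g j ω ∂P = μvec)
    (hbar : P {ω | a < ‖(N : ℝ)⁻¹ • (∑ j : Fin N, g j ω) - μvec‖} ≤ ENNReal.ofReal p₀)
    (heach : ∀ j, P {ω | b < ‖g j ω - μvec‖} ≤ ENNReal.ofReal (1 / 9)) :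
    P {ω | ((Set.ncard {j : Fin N | ‖g j ω - (N : ℝ)⁻¹ • (∑ i : Fin N, g i ω)‖ ≤ a + b} : ℝ)
        < (M : ℝ) / 2)}
      ≤ ENNReal.ofReal (p₀ + Real.exp (-2 * N * (8 / 9 - M / (2 * N)) ^ 2)) :=
  verification3_false_alarm_general P M N hN hMN g μvec a b p₀ hp₀ hmeas hindep hbar heach
end

section
/- Let f : ℝ^d → ℝ be L-smooth, let x ∈ ℝ^d, let 0 < γ ≤ 1/(4L), and let C, δ, σ ≥ 0 and N ≥ 1. Let ĝ and ḡ be random vectors in ℝ^d with E[ḡ] = ∇f(x), E[‖ĝ − ḡ‖²] ≤ C·δ·σ², and E[‖ĝ‖²] ≤ 2C·δ·σ² + 2‖∇f(x)‖² + 2σ²/N. Then E[f(x − γĝ)] ≤ f(x) − (γ/4)·‖∇f(x)‖² + 2γ·C·δ·σ² + L·γ²·σ²/N. -/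
/-!
Integrating the descent lemma `f (x + v) ≤ f x + ⟪∇f x, v⟫ + L/2 ‖v‖²` against the law of the
step `v = -γ ĝ` bounds the expectation by `f x - γ ⟪∇f x, E ĝ⟫ + L γ²/2 E‖ĝ‖²`. Write
`E ĝ = ∇f x + Δ` with `Δ = E[ĝ - ḡ]`; Jensen gives `‖Δ‖² ≤ Cδσ²`, so Young's inequality turns the
cross term into at most `-γ/2 ‖∇f x‖² + γ/2 Cδσ²`, and with `Lγ ≤ 1/4` the second-moment bound
absorbs the quadratic term into `γ/4 ‖∇f x‖² + γ/4 Cδσ² + Lγ²σ²/N`.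
-/

open MeasureTheory

section SmoothFunction

variable {E : Type*} [NormedAddCommGroup E] [InnerProductSpace ℝ E] [CompleteSpace E]
  {f : E → ℝ} {L : ℝ}

theorem abs_sub_sub_inner_gradient_le (hf : Differentiable ℝ f)
    (hL : ∀ x y, ‖gradient f x - gradient f y‖ ≤ L * ‖x - y‖) (x v : E) :
    |f (x + v) - f x - inner ℝ (gradient f x) v| ≤ L / 2 * ‖v‖ ^ 2 := by
  set φ : ℝ → ℝ := fun t => f (x + t • v) - f x - t * inner ℝ (gradient f x) v
  have hφ : ∀ t, HasDerivAt φ (inner ℝ (gradient f (x + t • v) - gradient f x) v) t := by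
    intro t
    have hline : HasDerivAt (fun t : ℝ => x + t • v) v t := by
      simpa using ((hasDerivAt_id t).smul_const v).const_add x
    have := (((hf _).hasGradientAt.hasFDerivAt.comp_hasDerivAt t hline).sub_const (f x)).sub
      ((hasDerivAt_id t).mul_const (inner ℝ (gradient f x) v))
    refine this.congr_deriv ?_
    simp [inner_sub_left]
  have hB : ∀ t, HasDerivAt (fun t : ℝ => L / 2 * t ^ 2 * ‖v‖ ^ 2) (L * t * ‖v‖ ^ 2) t := by
    intro t
    refine (((hasDerivAt_pow 2 t).const_mul (L / 2)).mul_const (‖v‖ ^ 2)).congr_deriv ?_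
    ring
  have hbound : ∀ t ∈ Set.Ico (0 : ℝ) 1,
      ‖inner ℝ (gradient f (x + t • v) - gradient f x) v‖ ≤ L * t * ‖v‖ ^ 2 := by
    rintro t ⟨ht, -⟩
    calc ‖inner ℝ (gradient f (x + t • v) - gradient f x) v‖
        ≤ ‖gradient f (x + t • v) - gradient f x‖ * ‖v‖ := norm_inner_le_norm _ _
      _ ≤ L * ‖t • v‖ * ‖v‖ := by
          gcongr
          simpa using hL (x + t • v) x
      _ = L * t * ‖v‖ ^ 2 := by rw [norm_smul, Real.norm_of_nonneg ht]; ring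
  have := image_norm_le_of_norm_deriv_right_le_deriv_boundary
    (fun t _ => (hφ t).continuousAt.continuousWithinAt) (fun t _ => (hφ t).hasDerivWithinAt)
    (by simp [φ]) hB hbound (Set.right_mem_Icc.2 zero_le_one)
  simpa [φ, Real.norm_eq_abs] using this

end SmoothFunction

theorem sq_norm_integral_le_integral_sq_norm {Ω E : Type*} [MeasurableSpace Ω] {P : Measure Ω}
    [IsProbabilityMeasure P] [NormedAddCommGroup E] [NormedSpace ℝ E] [CompleteSpace E]
    {Y : Ω → E} (hY : Integrable Y P) (hY2 : Integrable (fun ω => ‖Y ω‖ ^ 2) P) :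
    ‖∫ ω, Y ω ∂P‖ ^ 2 ≤ ∫ ω, ‖Y ω‖ ^ 2 ∂P :=
  (convexOn_univ_norm.pow (fun _ _ => norm_nonneg _) 2).map_integral_le
    (continuous_norm.pow 2).continuousOn isClosed_univ (by simp) hY hY2

section RandomStep

variable {Ω E : Type*} [MeasurableSpace Ω] {P : Measure Ω}
  [NormedAddCommGroup E] [InnerProductSpace ℝ E] [CompleteSpace E] {f : E → ℝ} {L : ℝ}
  {X : Ω → E}

theorem integrable_comp_add_of_lipschitz_gradient [IsFiniteMeasure P] (hf : Differentiable ℝ f)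
    (hL : ∀ x y, ‖gradient f x - gradient f y‖ ≤ L * ‖x - y‖) (x : E) (hX : Integrable X P)
    (hX2 : Integrable (fun ω => ‖X ω‖ ^ 2) P) :
    Integrable (fun ω => f (x + X ω)) P := by
  refine Integrable.mono' (g := fun ω => |f x| + ‖gradient f x‖ * ‖X ω‖ + L / 2 * ‖X ω‖ ^ 2)
    (((integrable_const _).add (hX.norm.const_mul _)).add (hX2.const_mul _))
    (hf.continuous.comp_aestronglyMeasurable (hX.aestronglyMeasurable.const_add x))
    (Filter.Eventually.of_forall fun ω => ?_)
  have hTaylor := abs_sub_sub_inner_gradient_le hf hL x (X ω)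
  have hinner := abs_real_inner_le_norm (gradient f x) (X ω)
  rw [abs_le] at hTaylor hinner
  rw [Real.norm_eq_abs, abs_le]
  constructor <;> linarith [neg_abs_le (f x), le_abs_self (f x)]

theorem integral_comp_add_le_of_lipschitz_gradient [IsProbabilityMeasure P]
    (hf : Differentiable ℝ f) (hL : ∀ x y, ‖gradient f x - gradient f y‖ ≤ L * ‖x - y‖) (x : E)
    (hX : Integrable X P) (hX2 : Integrable (fun ω => ‖X ω‖ ^ 2) P) :
    ∫ ω, f (x + X ω) ∂P
      ≤ f x + inner ℝ (gradient f x) (∫ ω, X ω ∂P) + L / 2 * ∫ ω, ‖X ω‖ ^ 2 ∂P := by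
  have hupper : ∀ ω, f (x + X ω)
      ≤ f x + inner ℝ (gradient f x) (X ω) + L / 2 * ‖X ω‖ ^ 2 := fun ω => by
    linarith [le_abs_self (f (x + X ω) - f x - inner ℝ (gradient f x) (X ω)),
      abs_sub_sub_inner_gradient_le hf hL x (X ω)]
  have hinner : Integrable (fun ω => inner ℝ (gradient f x) (X ω)) P := hX.const_inner _
  calc ∫ ω, f (x + X ω) ∂P
      ≤ ∫ ω, (f x + inner ℝ (gradient f x) (X ω) + L / 2 * ‖X ω‖ ^ 2) ∂P :=
        integral_mono (integrable_comp_add_of_lipschitz_gradient hf hL x hX hX2)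
          (((integrable_const _).add hinner).add (hX2.const_mul _)) hupper
    _ = f x + inner ℝ (gradient f x) (∫ ω, X ω ∂P) + L / 2 * ∫ ω, ‖X ω‖ ^ 2 ∂P := by
        rw [integral_add (by fun_prop) (hX2.const_mul _), integral_add (by fun_prop) hinner,
          integral_const, integral_inner hX, integral_const_mul, probReal_univ, one_smul]

theorem integral_comp_sub_smul_le_of_lipschitz_gradient [IsProbabilityMeasure P]
    (hf : Differentiable ℝ f) (hL : ∀ x y, ‖gradient f x - gradient f y‖ ≤ L * ‖x - y‖) (x : E)
    (γ : ℝ) (hX : Integrable X P) (hX2 : Integrable (fun ω => ‖X ω‖ ^ 2) P) :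
    ∫ ω, f (x - γ • X ω) ∂P
      ≤ f x - γ * inner ℝ (gradient f x) (∫ ω, X ω ∂P) + L * γ ^ 2 / 2 * ∫ ω, ‖X ω‖ ^ 2 ∂P := by
  have hstep := integral_comp_add_le_of_lipschitz_gradient hf hL x (X := fun ω => -γ • X ω)
    (hX.smul (-γ)) (by
      simp only [norm_smul, mul_pow, Real.norm_eq_abs, sq_abs, neg_sq]
      exact hX2.const_mul (γ ^ 2))
  simp only [neg_smul, ← sub_eq_add_neg, norm_neg, norm_smul, mul_pow, Real.norm_eq_abs, sq_abs,
    integral_neg, integral_smul, inner_neg_right, real_inner_smul_right, integral_const_mul]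
    at hstep
  linarith

end RandomStep

theorem btard_sgd_one_step_descent_general
    {Ω : Type*} [MeasurableSpace Ω] (P : Measure Ω) [IsProbabilityMeasure P]
    {d : ℕ} (f : EuclideanSpace ℝ (Fin d) → ℝ) (L : ℝ) (hL : 0 < L)
    (hdiff : Differentiable ℝ f)
    (hsmooth : ∀ x y, ‖gradient f x - gradient f y‖ ≤ L * ‖x - y‖)
    (x : EuclideanSpace ℝ (Fin d)) (γ C δ σ : ℝ) (N : ℕ)
    (hγ : 0 < γ) (hγL : γ ≤ 1 / (4 * L))
    (ghat gbar : Ω → EuclideanSpace ℝ (Fin d))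
    (hghatint : Integrable ghat P) (hgbarint : Integrable gbar P)
    (hdevint : Integrable (fun ω => ‖ghat ω - gbar ω‖ ^ 2) P)
    (hsecint : Integrable (fun ω => ‖ghat ω‖ ^ 2) P)
    (hmean : ∫ ω, gbar ω ∂P = gradient f x)
    (hdev : ∫ ω, ‖ghat ω - gbar ω‖ ^ 2 ∂P ≤ C * δ * σ ^ 2)
    (hsec : ∫ ω, ‖ghat ω‖ ^ 2 ∂P
      ≤ 2 * C * δ * σ ^ 2 + 2 * ‖gradient f x‖ ^ 2 + 2 * σ ^ 2 / N) :
    ∫ ω, f (x - γ • ghat ω) ∂P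
      ≤ f x - (γ / 4) * ‖gradient f x‖ ^ 2 + 2 * γ * C * δ * σ ^ 2 + L * γ ^ 2 * σ ^ 2 / N := by
  set Δ := ∫ ω, (ghat ω - gbar ω) ∂P
  have hΔ : ‖Δ‖ ^ 2 ≤ C * δ * σ ^ 2 :=
    (sq_norm_integral_le_integral_sq_norm (hghatint.sub hgbarint) hdevint).trans hdev
  have hshift : ∫ ω, ghat ω ∂P = gradient f x + Δ := by
    rw [← sub_eq_iff_eq_add', ← hmean]
    exact (integral_sub hghatint hgbarint).symm
  have hstep := integral_comp_sub_smul_le_of_lipschitz_gradient hdiff hsmooth x γ hghatint hsecint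
  rw [hshift, inner_add_right, real_inner_self_eq_norm_sq] at hstep
  have hcross : -inner ℝ (gradient f x) Δ ≤ ‖gradient f x‖ ^ 2 / 2 + C * δ * σ ^ 2 / 2 := by
    linarith [neg_le_of_abs_le (abs_real_inner_le_norm (gradient f x) Δ),
      two_mul_le_add_sq ‖gradient f x‖ ‖Δ‖]
  have hLγ : L * γ ≤ 1 / 4 := by
    rw [le_div_iff₀ (by positivity)] at hγL
    linarith
  have hK : 0 ≤ C * δ * σ ^ 2 := (sq_nonneg _).trans hΔ
  have hsec' := mul_le_mul_of_nonneg_left hsec (by positivity : 0 ≤ L * γ ^ 2 / 2)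
  have hcross' := mul_le_mul_of_nonneg_left hcross hγ.le
  have hgrad := mul_le_mul_of_nonneg_right hLγ (mul_nonneg hγ.le (sq_nonneg ‖gradient f x‖))
  have hdev' := mul_le_mul_of_nonneg_right hLγ (mul_nonneg hγ.le hK)
  linear_combination hstep + hsec' + hcross' + hgrad + hdev' + 5 / 4 * mul_nonneg hγ.le hK

/-- One-step descent inequality for SGD driven by a robustly aggregated
gradient estimate `ĝ`: if `f` is `L`-smooth, `0 < γ ≤ 1/(4L)`, `E[ḡ] = ∇f(x)`,
`E[‖ĝ − ḡ‖²] ≤ Cδσ²` and `E[‖ĝ‖²] ≤ 2Cδσ² + 2‖∇f(x)‖² + 2σ²/N`, then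
`E[f(x − γĝ)] ≤ f(x) − (γ/4)‖∇f(x)‖² + 2γCδσ² + Lγ²σ²/N`. -/
theorem btard_sgd_one_step_descent
    {Ω : Type*} [MeasurableSpace Ω] (P : Measure Ω) [IsProbabilityMeasure P]
    {d : ℕ} (f : EuclideanSpace ℝ (Fin d) → ℝ) (L : ℝ) (hL : 0 < L)
    (hdiff : Differentiable ℝ f)
    (hsmooth : ∀ x y, ‖gradient f x - gradient f y‖ ≤ L * ‖x - y‖)
    (x : EuclideanSpace ℝ (Fin d)) (γ C δ σ : ℝ) (N : ℕ) (hN : 1 ≤ N)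
    (hγ : 0 < γ) (hγL : γ ≤ 1 / (4 * L)) (hC : 0 ≤ C) (hδ : 0 ≤ δ) (hσ : 0 ≤ σ)
    (ghat gbar : Ω → EuclideanSpace ℝ (Fin d))
    (hghatmeas : AEStronglyMeasurable ghat P) (hgbarmeas : AEStronglyMeasurable gbar P)
    (hghatint : Integrable ghat P) (hgbarint : Integrable gbar P)
    (hdevint : Integrable (fun ω => ‖ghat ω - gbar ω‖ ^ 2) P)
    (hsecint : Integrable (fun ω => ‖ghat ω‖ ^ 2) P)
    (hmean : ∫ ω, gbar ω ∂P = gradient f x)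
    (hdev : ∫ ω, ‖ghat ω - gbar ω‖ ^ 2 ∂P ≤ C * δ * σ ^ 2)
    (hsec : ∫ ω, ‖ghat ω‖ ^ 2 ∂P
      ≤ 2 * C * δ * σ ^ 2 + 2 * ‖gradient f x‖ ^ 2 + 2 * σ ^ 2 / N) :
    ∫ ω, f (x - γ • ghat ω) ∂P
      ≤ f x - (γ / 4) * ‖gradient f x‖ ^ 2 + 2 * γ * C * δ * σ ^ 2 + L * γ ^ 2 * σ ^ 2 / N :=
  btard_sgd_one_step_descent_general P f L hL hdiff hsmooth x γ C δ σ N hγ hγL ghat gbar hghatint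
    hgbarint hdevint hsecint hmean hdev hsec
end

section
/- Let f : ℝ^d → ℝ be L-smooth and bounded below by f_*. Let (F_k)_{k≥0} be a filtration, x⁰ ∈ ℝ^d, and for k = 0, …, K−1 let x^k be F_k-measurable, δ̂_k be a nonnegative F_k-measurable random variable, and ĝ^k, ḡ^k be random vectors satisfying, conditionally on F_k: E[ḡ^k | F_k] = ∇f(x^k), E[‖ĝ^k − ḡ^k‖² | F_k] ≤ C·δ̂_k·σ², and E[‖ĝ^k‖² | F_k] ≤ 2C·δ̂_k·σ² + 2‖∇f(x^k)‖² + 2σ²/N, with x^{k+1} = x^k − γ·ĝ^k. If 0 < γ ≤ 1/(4L) and E[∑_{k=0}^{K−1} δ̂_k] ≤ B, then (1/K)·∑_{k=0}^{K−1} E[‖∇f(x^k)‖²] ≤ 4(f(x⁰) − f_*)/(γK) + 8C·σ²·B/K + 4L·γ·σ²/N. -/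
open MeasureTheory ProbabilityTheory

noncomputable section

lemma descent_lemma {E : Type*} [NormedAddCommGroup E] [InnerProductSpace ℝ E] [CompleteSpace E]
    (f : E → ℝ) (L : ℝ) (hL : 0 ≤ L) (hdiff : Differentiable ℝ f)
    (hsm : ∀ y z, ‖gradient f y - gradient f z‖ ≤ L * ‖y - z‖)
    (x y : E) :
    f y ≤ f x + inner ℝ (gradient f x) (y - x) + L / 2 * ‖y - x‖ ^ 2 := by
  set v := y - x with hv
  set D : ℝ → ℝ := fun t => inner ℝ (gradient f (x + t • v)) v with hD
  have hder : ∀ t : ℝ, HasDerivAt (fun s => f (x + s • v)) (D t) t := by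
    intro t
    have hc : HasDerivAt (fun s : ℝ => x + s • v) v t := by
      simpa using ((hasDerivAt_id t).smul_const v).const_add x
    have hf : HasFDerivAt f (InnerProductSpace.toDual ℝ E (gradient f (x + t • v)))
        (x + t • v) := by
      rw [← hasGradientAt_iff_hasFDerivAt]
      exact (hdiff (x + t • v)).hasGradientAt
    have := hf.comp_hasDerivAt t hc
    exact this
  have hlip : LipschitzWith (Real.toNNReal L) (gradient f) := by
    apply LipschitzWith.of_dist_le_mul
    intro a b
    simpa [dist_eq_norm, Real.coe_toNNReal L hL] using hsm a b
  have hDcont : Continuous D := by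
    apply Continuous.inner
    · exact hlip.continuous.comp (by continuity)
    · exact continuous_const
  have hftc : ∫ t in (0:ℝ)..1, D t = f (x + (1:ℝ) • v) - f (x + (0:ℝ) • v) := by
    exact intervalIntegral.integral_eq_sub_of_hasDerivAt
      (fun t _ => hder t) (hDcont.intervalIntegrable 0 1)
  have hbound : ∀ t ∈ Set.Icc (0:ℝ) 1, D t ≤ D 0 + L * t * ‖v‖ ^ 2 := by
    intro t ht
    have h1 : D t - D 0 = inner ℝ (gradient f (x + t • v) - gradient f (x + (0:ℝ) • v)) v := by
      simp [D, inner_sub_left]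
    have h2 : D t - D 0 ≤ L * t * ‖v‖ ^ 2 := by
      rw [h1]
      calc inner ℝ (gradient f (x + t • v) - gradient f (x + (0:ℝ) • v)) v
          ≤ ‖gradient f (x + t • v) - gradient f (x + (0:ℝ) • v)‖ * ‖v‖ :=
            real_inner_le_norm _ _
        _ ≤ (L * ‖(x + t • v) - (x + (0:ℝ) • v)‖) * ‖v‖ := by
            gcongr; exact hsm _ _
        _ = L * t * ‖v‖ ^ 2 := by
            have : ‖(x + t • v) - (x + (0:ℝ) • v)‖ = t * ‖v‖ := by
              simp [norm_smul, abs_of_nonneg ht.1]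
            rw [this]; ring
    linarith
  have hint : ∫ t in (0:ℝ)..1, D t ≤ ∫ t in (0:ℝ)..1, (D 0 + L * t * ‖v‖ ^ 2) := by
    apply intervalIntegral.integral_mono_on (by norm_num)
      (hDcont.intervalIntegrable 0 1)
      (Continuous.intervalIntegrable (by continuity) 0 1)
    exact hbound
  have hrhs : ∫ t in (0:ℝ)..1, (D 0 + L * t * ‖v‖ ^ 2) = D 0 + L / 2 * ‖v‖ ^ 2 := by
    rw [intervalIntegral.integral_add (intervalIntegrable_const)
      (Continuous.intervalIntegrable (by continuity) 0 1)]
    simp only [intervalIntegral.integral_const, smul_eq_mul, one_mul, mul_comm]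
    have h3 : ∫ t in (0:ℝ)..1, L * t * ‖v‖ ^ 2 = L / 2 * ‖v‖ ^ 2 := by
      have h4 : (fun t : ℝ => L * t * ‖v‖ ^ 2) = fun t : ℝ => (L * ‖v‖ ^ 2) * t := by
        funext t; ring
      rw [h4, intervalIntegral.integral_const_mul, integral_id]
      ring
    rw [sub_zero, h3]
    ring_nf
  have hD0 : D 0 = inner ℝ (gradient f x) v := by simp [D]
  have h1v : x + (1:ℝ) • v = y := by simp [hv]
  have h0v : x + (0:ℝ) • v = x := by simp
  rw [h1v, h0v] at hftc
  rw [hrhs, hD0] at hint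
  linarith [hftc ▸ hint]

lemma condexp_clm {Ω : Type*} {m m0 : MeasurableSpace Ω} (hm : m ≤ m0)
    (μ : Measure Ω) [IsFiniteMeasure μ]
    {E F : Type*} [NormedAddCommGroup E] [NormedSpace ℝ E] [CompleteSpace E]
    [NormedAddCommGroup F] [NormedSpace ℝ F] [CompleteSpace F]
    (T : E →L[ℝ] F) {g : Ω → E} (hg : Integrable g μ) :
    (fun ω => T ((μ[g|m]) ω)) =ᵐ[μ] μ[fun ω => T (g ω)|m] := by
  refine ae_eq_condExp_of_forall_setIntegral_eq hm (T.integrable_comp hg) ?_ ?_ ?_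
  · intro s _ _
    exact (T.integrable_comp integrable_condExp).integrableOn
  · intro s hs hμs
    rw [T.integral_comp_comm integrable_condExp.integrableOn,
      setIntegral_condExp hm hg hs, T.integral_comp_comm hg.integrableOn]
  · exact StronglyMeasurable.aestronglyMeasurable
      (T.continuous.comp_stronglyMeasurable stronglyMeasurable_condExp)

lemma integrable_inner_of_memL2 {Ω : Type*} {m0 : MeasurableSpace Ω} {μ : Measure Ω}
    {E : Type*} [NormedAddCommGroup E] [InnerProductSpace ℝ E]
    {f g : Ω → E} (hf : MemLp f 2 μ) (hg : MemLp g 2 μ) :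
    Integrable (fun ω => (inner ℝ (f ω) (g ω) : ℝ)) μ := by
  have := L2.integrable_inner (𝕜 := ℝ) (hf.toLp f) (hg.toLp g)
  refine this.congr ?_
  filter_upwards [hf.coeFn_toLp, hg.coeFn_toLp] with ω h1 h2
  rw [h1, h2]

lemma integral_inner_condexp {Ω : Type*} {m m0 : MeasurableSpace Ω} (hm : m ≤ m0)
    (μ : Measure Ω) [IsProbabilityMeasure μ] {d : ℕ}
    {a g : Ω → EuclideanSpace ℝ (Fin d)}
    (ham : StronglyMeasurable[m] a) (ha2 : MemLp a 2 μ)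
    (hg : Integrable g μ) (hg2 : MemLp g 2 μ)
    (hmean : μ[g|m] =ᵐ[μ] a) :
    ∫ ω, (inner ℝ (a ω) (g ω) : ℝ) ∂μ = ∫ ω, ‖a ω‖ ^ 2 ∂μ := by
  have hinner : ∀ (x y : EuclideanSpace ℝ (Fin d)), (inner ℝ x y : ℝ) = ∑ i, x i * y i := by
    intro x y; simp [PiLp.inner_apply, RCLike.inner_apply, conj_trivial]; exact Finset.sum_congr rfl (fun _ _ => mul_comm _ _)
  have hai2 : ∀ i : Fin d, MemLp (fun ω => a ω i) 2 μ := fun i =>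
    (EuclideanSpace.proj (𝕜 := ℝ) i).comp_memLp' ha2
  have hgi2 : ∀ i : Fin d, MemLp (fun ω => g ω i) 2 μ := fun i =>
    (EuclideanSpace.proj (𝕜 := ℝ) i).comp_memLp' hg2
  have hprod_int : ∀ i : Fin d, Integrable (fun ω => a ω i * g ω i) μ := by
    intro i
    have := integrable_inner_of_memL2 (E := ℝ) (hai2 i) (hgi2 i)
    simpa [RCLike.inner_apply, conj_trivial, mul_comm] using this
  have hsq_int : ∀ i : Fin d, Integrable (fun ω => a ω i * a ω i) μ := by
    intro i
    have := integrable_inner_of_memL2 (E := ℝ) (hai2 i) (hai2 i)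
    simpa [RCLike.inner_apply, conj_trivial, pow_two] using this
  have key : ∀ i : Fin d, ∫ ω, a ω i * g ω i ∂μ = ∫ ω, a ω i * a ω i ∂μ := by
    intro i
    have hgi_int : Integrable (fun ω => g ω i) μ :=
      ((EuclideanSpace.proj (𝕜 := ℝ) i).integrable_comp hg)
    have hcond_gi : (μ[fun ω => g ω i|m]) =ᵐ[μ] fun ω => a ω i := by
      have h1 := (condexp_clm hm μ (EuclideanSpace.proj (𝕜 := ℝ) i) hg).symm
      refine h1.trans ?_
      filter_upwards [hmean] with ω hω
      simp [hω]
    have hpull : μ[(fun ω => a ω i) * (fun ω => g ω i)|m]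
        =ᵐ[μ] (fun ω => a ω i) * μ[fun ω => g ω i|m] := by
      refine condExp_mul_of_stronglyMeasurable_left ?_ ?_ hgi_int
      · exact ((EuclideanSpace.proj (𝕜 := ℝ) i).continuous.comp_stronglyMeasurable ham)
      · exact hprod_int i
    calc ∫ ω, a ω i * g ω i ∂μ
        = ∫ ω, (μ[(fun ω => a ω i) * (fun ω => g ω i)|m]) ω ∂μ :=
          (integral_condExp hm).symm
      _ = ∫ ω, a ω i * a ω i ∂μ := by
          refine integral_congr_ae ?_
          filter_upwards [hpull, hcond_gi] with ω h1 h2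
          rw [h1]
          simp only [Pi.mul_apply]
          rw [h2]
  calc ∫ ω, (inner ℝ (a ω) (g ω) : ℝ) ∂μ
      = ∫ ω, ∑ i, a ω i * g ω i ∂μ := by simp_rw [hinner]
    _ = ∑ i, ∫ ω, a ω i * g ω i ∂μ := integral_finset_sum _ (fun i _ => hprod_int i)
    _ = ∑ i, ∫ ω, a ω i * a ω i ∂μ := by simp_rw [key]
    _ = ∫ ω, ∑ i, a ω i * a ω i ∂μ := (integral_finset_sum _ (fun i _ => hsq_int i)).symm
    _ = ∫ ω, ‖a ω‖ ^ 2 ∂μ := by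
        refine integral_congr_ae (Filter.Eventually.of_forall fun ω => ?_)
        simp only []
        rw [← real_inner_self_eq_norm_sq, hinner]

lemma step_arith (γ L C σ snn G1 F Iah Idev Ih Ak Dk : ℝ)
    (hγ : 0 < γ) (hL : 0 ≤ L) (hLγ2 : L * γ ^ 2 ≤ γ / 4) (hCσ : 0 ≤ C * σ ^ 2)
    (hAk : 0 ≤ Ak) (hDk : 0 ≤ Dk)
    (hGk1 : G1 ≤ F - γ * Iah + L * γ ^ 2 / 2 * Ih)
    (hIah_lb : Ak - (Ak / 2 + Idev / 2) ≤ Iah)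
    (hIdev : Idev ≤ C * σ ^ 2 * Dk)
    (hIh : Ih ≤ 2 * C * σ ^ 2 * Dk + 2 * Ak + 2 * snn) :
    G1 + γ / 4 * Ak ≤ F + (3 * γ / 4 * (C * σ ^ 2) * Dk + L * γ ^ 2 * snn) := by
  have X1 := mul_le_mul_of_nonneg_left hIah_lb hγ.le
  have X2 := mul_le_mul_of_nonneg_left hIdev (by positivity : (0:ℝ) ≤ γ / 2)
  have X3 := mul_le_mul_of_nonneg_left hIh (div_nonneg (mul_nonneg hL (sq_nonneg γ)) two_pos.le)
  have X4 : 0 ≤ (γ / 4 - L * γ ^ 2) * Ak := mul_nonneg (by linarith) hAk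
  have X5 : 0 ≤ (γ / 4 - L * γ ^ 2) * (C * σ ^ 2 * Dk) :=
    mul_nonneg (by linarith) (mul_nonneg hCσ hDk)
  linarith [X1, X2, X3, X4, X5]

set_option maxHeartbeats 1000000 in
/-- Non-convex convergence guarantee for BTARD-SGD, formulated as parallel
SGD with shifted updates: if `f` is `L`-smooth and bounded below by `f_*`, the per-step
aggregation corruption is controlled by `δ̂_k` conditionally on `F_k`, the updates are
`x^{k+1} = x^k − γ·ĝ^k` with `0 < γ ≤ 1/(4L)` and `E[∑_{k<K} δ̂_k] ≤ B`, then
`(1/K)·∑_{k<K} E[‖∇f(x^k)‖²] ≤ 4(f(x⁰) − f_*)/(γK) + 8Cσ²B/K + 4Lγσ²/N`. -/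
theorem btard_sgd_nonconvex_convergence
    {Ω : Type*} {m0 : MeasurableSpace Ω} (P : Measure Ω) [IsProbabilityMeasure P]
    (ℱ : Filtration ℕ m0) {d : ℕ}
    (f : EuclideanSpace ℝ (Fin d) → ℝ) (L fstar : ℝ) (hL : 0 < L)
    (hdiff : Differentiable ℝ f)
    (hsmooth : ∀ y z, ‖gradient f y - gradient f z‖ ≤ L * ‖y - z‖)
    (hbelow : ∀ y, fstar ≤ f y)
    (K N : ℕ) (hK : 0 < K) (hN : 1 ≤ N)
    (γ C σ B : ℝ) (hγ : 0 < γ) (hγL : γ ≤ 1 / (4 * L)) (hC : 0 ≤ C) (hσ : 0 ≤ σ)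
    (x0 : EuclideanSpace ℝ (Fin d))
    (x ghat gbar : ℕ → Ω → EuclideanSpace ℝ (Fin d)) (δhat : ℕ → Ω → ℝ)
    (hx0 : x 0 = fun _ => x0)
    (hxmeas : ∀ k < K, StronglyMeasurable[ℱ k] (x k))
    (hδmeas : ∀ k < K, StronglyMeasurable[ℱ k] (δhat k))
    (hδnonneg : ∀ k < K, ∀ ω, 0 ≤ δhat k ω)
    (hδint : ∀ k < K, Integrable (δhat k) P)
    (hgbarint : ∀ k < K, Integrable (gbar k) P)
    (hghatint : ∀ k < K, Integrable (ghat k) P)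
    (hdevint : ∀ k < K, Integrable (fun ω => ‖ghat k ω - gbar k ω‖ ^ 2) P)
    (hsecint : ∀ k < K, Integrable (fun ω => ‖ghat k ω‖ ^ 2) P)
    (hfint : ∀ k < K, Integrable (fun ω => f (x k ω)) P)
    (hgradint : ∀ k < K, Integrable (fun ω => ‖gradient f (x k ω)‖ ^ 2) P)
    (hmean : ∀ k < K, P[gbar k|ℱ k] =ᵐ[P] fun ω => gradient f (x k ω))
    (hdev : ∀ k < K, ∀ᵐ ω ∂P,
      (P[fun ω' => ‖ghat k ω' - gbar k ω'‖ ^ 2|ℱ k]) ω ≤ C * δhat k ω * σ ^ 2)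
    (hsec : ∀ k < K, ∀ᵐ ω ∂P,
      (P[fun ω' => ‖ghat k ω'‖ ^ 2|ℱ k]) ω
        ≤ 2 * C * δhat k ω * σ ^ 2 + 2 * ‖gradient f (x k ω)‖ ^ 2 + 2 * σ ^ 2 / N)
    (hupd : ∀ k < K, ∀ ω, x (k + 1) ω = x k ω - γ • ghat k ω)
    (hB : ∫ ω, (∑ k ∈ Finset.range K, δhat k ω) ∂P ≤ B) :
    (1 / K : ℝ) * ∑ k ∈ Finset.range K, ∫ ω, ‖gradient f (x k ω)‖ ^ 2 ∂P
      ≤ 4 * (f x0 - fstar) / (γ * K) + 8 * C * σ ^ 2 * B / K + 4 * L * γ * σ ^ 2 / N := by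
  have hlip : LipschitzWith (Real.toNNReal L) (gradient f) := by
    apply LipschitzWith.of_dist_le_mul
    intro a b
    simpa [dist_eq_norm, Real.coe_toNNReal L hL.le] using hsmooth a b
  have hKpos : (0:ℝ) < K := by exact_mod_cast hK
  have hNpos : (0:ℝ) < N := by exact_mod_cast Nat.lt_of_lt_of_le Nat.zero_lt_one hN
  set A : ℕ → ℝ := fun k => ∫ ω, ‖gradient f (x k ω)‖ ^ 2 ∂P with hA
  set D : ℕ → ℝ := fun k => ∫ ω, δhat k ω ∂P with hDdef
  set G : ℕ → ℝ := fun k => if k < K then ∫ ω, f (x k ω) ∂P else fstar with hG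
  have hAnn : ∀ k, 0 ≤ A k := fun k => integral_nonneg (fun ω => by positivity)
  have hDnn : ∀ k, k < K → 0 ≤ D k := fun k hk =>
    integral_nonneg (fun ω => hδnonneg k hk ω)
  have hCσ : 0 ≤ C * σ ^ 2 := by positivity
  have hLγ2 : L * γ ^ 2 ≤ γ / 4 := by
    have h4L : (0:ℝ) < 4 * L := by positivity
    have h1 : γ * (4 * L) ≤ 1 := by
      calc γ * (4 * L) ≤ (1 / (4 * L)) * (4 * L) :=
            mul_le_mul_of_nonneg_right hγL h4L.le
        _ = 1 := by field_simp
    nlinarith [mul_le_mul_of_nonneg_left h1 hγ.le]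
  -- the per-step inequality
  have step : ∀ k, k < K →
      G (k + 1) + γ / 4 * A k ≤ G k + ((3 * γ / 4) * (C * σ ^ 2) * D k + L * γ ^ 2 * σ ^ 2 / N) := by
    intro k hk
    have hmle := ℱ.le k
    have hamk : StronglyMeasurable[ℱ k] (fun ω => gradient f (x k ω)) :=
      hlip.continuous.comp_stronglyMeasurable (hxmeas k hk)
    have haM : AEStronglyMeasurable (fun ω => gradient f (x k ω)) P :=
      (hamk.mono hmle).aestronglyMeasurable
    have ha2 : MemLp (fun ω => gradient f (x k ω)) 2 P :=
      (memLp_two_iff_integrable_sq_norm haM).mpr (hgradint k hk)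
    have hh2 : MemLp (ghat k) 2 P :=
      (memLp_two_iff_integrable_sq_norm (hghatint k hk).1).mpr (hsecint k hk)
    have hdev2 : MemLp (fun ω => ghat k ω - gbar k ω) 2 P :=
      (memLp_two_iff_integrable_sq_norm ((hghatint k hk).1.sub (hgbarint k hk).1)).mpr
        (hdevint k hk)
    have hg2 : MemLp (gbar k) 2 P := by
      have h := hh2.sub hdev2
      have he : (ghat k - fun ω => ghat k ω - gbar k ω) = gbar k := by
        funext ω; simp
      rwa [he] at h
    have hint_ah : Integrable (fun ω => (inner ℝ (gradient f (x k ω)) (ghat k ω) : ℝ)) P :=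
      integrable_inner_of_memL2 ha2 hh2
    have hint_ag : Integrable (fun ω => (inner ℝ (gradient f (x k ω)) (gbar k ω) : ℝ)) P :=
      integrable_inner_of_memL2 ha2 hg2
    have hint_adev :
        Integrable (fun ω => (inner ℝ (gradient f (x k ω)) (ghat k ω - gbar k ω) : ℝ)) P :=
      integrable_inner_of_memL2 ha2 hdev2
    have hint_gah : Integrable (fun ω => γ * (inner ℝ (gradient f (x k ω)) (ghat k ω) : ℝ)) P :=
      hint_ah.const_mul γ
    have hint_sub : Integrable (fun ω => f (x k ω)
        - γ * (inner ℝ (gradient f (x k ω)) (ghat k ω) : ℝ)) P :=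
      (hfint k hk).sub hint_gah
    have hint_cn : Integrable (fun ω => L * γ ^ 2 / 2 * ‖ghat k ω‖ ^ 2) P :=
      (hsecint k hk).const_mul _
    -- pointwise descent
    have hdesc : ∀ ω, f (x (k + 1) ω) ≤ f (x k ω)
        - γ * inner ℝ (gradient f (x k ω)) (ghat k ω)
        + L * γ ^ 2 / 2 * ‖ghat k ω‖ ^ 2 := by
      intro ω
      have h := descent_lemma f L hL.le hdiff hsmooth (x k ω) (x (k + 1) ω)
      have he : x (k + 1) ω - x k ω = -(γ • ghat k ω) := by
        rw [hupd k hk ω]; abel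
      rw [he, inner_neg_right, real_inner_smul_right, norm_neg, norm_smul,
        Real.norm_eq_abs, abs_of_pos hγ, mul_pow] at h
      nlinarith [h]
    have hRHSint : Integrable (fun ω => f (x k ω)
        - γ * (inner ℝ (gradient f (x k ω)) (ghat k ω) : ℝ)
        + L * γ ^ 2 / 2 * ‖ghat k ω‖ ^ 2) P := hint_sub.add hint_cn
    have hIRHS : ∫ ω, (f (x k ω)
        - γ * (inner ℝ (gradient f (x k ω)) (ghat k ω) : ℝ)
        + L * γ ^ 2 / 2 * ‖ghat k ω‖ ^ 2) ∂P
        = (∫ ω, f (x k ω) ∂P)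
          - γ * ∫ ω, (inner ℝ (gradient f (x k ω)) (ghat k ω) : ℝ) ∂P
          + L * γ ^ 2 / 2 * ∫ ω, ‖ghat k ω‖ ^ 2 ∂P := by
      rw [integral_add hint_sub hint_cn, integral_sub (hfint k hk) hint_gah,
        integral_const_mul, integral_const_mul]
    have hGk1 : G (k + 1) ≤ (∫ ω, f (x k ω) ∂P)
        - γ * ∫ ω, (inner ℝ (gradient f (x k ω)) (ghat k ω) : ℝ) ∂P
        + L * γ ^ 2 / 2 * ∫ ω, ‖ghat k ω‖ ^ 2 ∂P := by
      rw [← hIRHS]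
      by_cases h1 : k + 1 < K
      · have hGe : G (k + 1) = ∫ ω, f (x (k + 1) ω) ∂P := by simp [hG, h1]
        rw [hGe]
        exact integral_mono (hfint (k + 1) h1) hRHSint hdesc
      · have hGe : G (k + 1) = fstar := by simp [hG, h1]
        rw [hGe]
        have h2 : ∫ _, (fstar : ℝ) ∂P = fstar := by simp
        rw [← h2]
        exact integral_mono (integrable_const _) hRHSint
          (fun ω => (hbelow _).trans (hdesc ω))
    -- bound on deviation second moment
    have hint_cd : Integrable (fun ω => C * σ ^ 2 * δhat k ω) P := (hδint k hk).const_mul _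
    have hIdev : ∫ ω, ‖ghat k ω - gbar k ω‖ ^ 2 ∂P ≤ C * σ ^ 2 * D k := by
      have h1 : ∫ ω, ‖ghat k ω - gbar k ω‖ ^ 2 ∂P
          = ∫ ω, (P[fun ω' => ‖ghat k ω' - gbar k ω'‖ ^ 2|ℱ k]) ω ∂P :=
        (integral_condExp hmle).symm
      rw [h1]
      have h2 : ∫ ω, (P[fun ω' => ‖ghat k ω' - gbar k ω'‖ ^ 2|ℱ k]) ω ∂P
          ≤ ∫ ω, C * σ ^ 2 * δhat k ω ∂P := by
        refine integral_mono_ae integrable_condExp hint_cd ?_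
        filter_upwards [hdev k hk] with ω hω
        calc (P[fun ω' => ‖ghat k ω' - gbar k ω'‖ ^ 2|ℱ k]) ω
            ≤ C * δhat k ω * σ ^ 2 := hω
          _ = C * σ ^ 2 * δhat k ω := by ring
      rw [integral_const_mul] at h2
      simpa only [hDdef] using h2
    -- bound on second moment of ghat
    have hint_d2 : Integrable (fun ω => 2 * C * σ ^ 2 * δhat k ω) P := (hδint k hk).const_mul _
    have hint_a2 : Integrable (fun ω => 2 * ‖gradient f (x k ω)‖ ^ 2) P :=
      (hgradint k hk).const_mul 2
    have hint_a2c : Integrable (fun ω => 2 * ‖gradient f (x k ω)‖ ^ 2 + 2 * σ ^ 2 / N) P :=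
      hint_a2.add (integrable_const _)
    have hIh : ∫ ω, ‖ghat k ω‖ ^ 2 ∂P
        ≤ 2 * C * σ ^ 2 * D k + 2 * A k + 2 * σ ^ 2 / N := by
      have h1 : ∫ ω, ‖ghat k ω‖ ^ 2 ∂P
          = ∫ ω, (P[fun ω' => ‖ghat k ω'‖ ^ 2|ℱ k]) ω ∂P :=
        (integral_condExp hmle).symm
      rw [h1]
      have h2 : ∫ ω, (P[fun ω' => ‖ghat k ω'‖ ^ 2|ℱ k]) ω ∂P
          ≤ ∫ ω, (2 * C * σ ^ 2 * δhat k ω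
              + (2 * ‖gradient f (x k ω)‖ ^ 2 + 2 * σ ^ 2 / N)) ∂P := by
        refine integral_mono_ae integrable_condExp (hint_d2.add hint_a2c) ?_
        filter_upwards [hsec k hk] with ω hω
        calc (P[fun ω' => ‖ghat k ω'‖ ^ 2|ℱ k]) ω
            ≤ 2 * C * δhat k ω * σ ^ 2 + 2 * ‖gradient f (x k ω)‖ ^ 2 + 2 * σ ^ 2 / N := hω
          _ = 2 * C * σ ^ 2 * δhat k ω
              + (2 * ‖gradient f (x k ω)‖ ^ 2 + 2 * σ ^ 2 / N) := by ring
      have h3 : ∫ ω, (2 * C * σ ^ 2 * δhat k ω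
          + (2 * ‖gradient f (x k ω)‖ ^ 2 + 2 * σ ^ 2 / N)) ∂P
          = 2 * C * σ ^ 2 * D k + (2 * A k + 2 * σ ^ 2 / N) := by
        rw [integral_add hint_d2 hint_a2c, integral_add hint_a2 (integrable_const _),
          integral_const_mul, integral_const_mul, integral_const]
        simp only [hDdef, hA, measure_univ, ENNReal.toReal_one, smul_eq_mul, one_mul, probReal_univ]
      rw [h3] at h2
      linarith
    -- inner product with gbar equals A k
    have hIag : ∫ ω, (inner ℝ (gradient f (x k ω)) (gbar k ω) : ℝ) ∂P = A k :=
      integral_inner_condexp hmle P hamk ha2 (hgbarint k hk) hg2 (hmean k hk)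
    -- splitting the inner product
    have hIah : ∫ ω, (inner ℝ (gradient f (x k ω)) (ghat k ω) : ℝ) ∂P
        = (∫ ω, (inner ℝ (gradient f (x k ω)) (gbar k ω) : ℝ) ∂P)
          + ∫ ω, (inner ℝ (gradient f (x k ω)) (ghat k ω - gbar k ω) : ℝ) ∂P := by
      rw [← integral_add hint_ag hint_adev]
      refine integral_congr_ae (Filter.Eventually.of_forall fun ω => ?_)
      simp only []
      have he : gbar k ω + (ghat k ω - gbar k ω) = ghat k ω := by abel
      rw [← inner_add_right, he]
    -- lower bound on the cross term
    have hint_n1 : Integrable (fun ω => ‖gradient f (x k ω)‖ ^ 2 / 2) P :=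
      (hgradint k hk).div_const 2
    have hint_n2 : Integrable (fun ω => ‖ghat k ω - gbar k ω‖ ^ 2 / 2) P :=
      (hdevint k hk).div_const 2
    have hIadev : -(A k / 2 + (∫ ω, ‖ghat k ω - gbar k ω‖ ^ 2 ∂P) / 2)
        ≤ ∫ ω, (inner ℝ (gradient f (x k ω)) (ghat k ω - gbar k ω) : ℝ) ∂P := by
      have hlhsint : Integrable (fun ω =>
          -(‖gradient f (x k ω)‖ ^ 2 / 2 + ‖ghat k ω - gbar k ω‖ ^ 2 / 2)) P :=
        (hint_n1.add hint_n2).neg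
      have hpt : ∀ ω, -(‖gradient f (x k ω)‖ ^ 2 / 2 + ‖ghat k ω - gbar k ω‖ ^ 2 / 2)
          ≤ (inner ℝ (gradient f (x k ω)) (ghat k ω - gbar k ω) : ℝ) := by
        intro ω
        have h1 := abs_real_inner_le_norm (gradient f (x k ω)) (ghat k ω - gbar k ω)
        have h2 := neg_abs_le (inner ℝ (gradient f (x k ω)) (ghat k ω - gbar k ω) : ℝ)
        have h3 : ‖gradient f (x k ω)‖ * ‖ghat k ω - gbar k ω‖
            ≤ ‖gradient f (x k ω)‖ ^ 2 / 2 + ‖ghat k ω - gbar k ω‖ ^ 2 / 2 := by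
          nlinarith [sq_nonneg (‖gradient f (x k ω)‖ - ‖ghat k ω - gbar k ω‖)]
        linarith
      have hm := integral_mono hlhsint hint_adev hpt
      have he : ∫ ω, -(‖gradient f (x k ω)‖ ^ 2 / 2 + ‖ghat k ω - gbar k ω‖ ^ 2 / 2) ∂P
          = -(A k / 2 + (∫ ω, ‖ghat k ω - gbar k ω‖ ^ 2 ∂P) / 2) := by
        rw [integral_neg, integral_add hint_n1 hint_n2, integral_div, integral_div]
      rw [he] at hm
      exact hm
    -- assemble
    have hGkk : G k = ∫ ω, f (x k ω) ∂P := by simp [hG, hk]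
    have hIah_lb : A k - (A k / 2 + (∫ ω, ‖ghat k ω - gbar k ω‖ ^ 2 ∂P) / 2)
        ≤ ∫ ω, (inner ℝ (gradient f (x k ω)) (ghat k ω) : ℝ) ∂P := by
      rw [hIah, hIag]
      linarith [hIadev]
    have hIh' : ∫ ω, ‖ghat k ω‖ ^ 2 ∂P
        ≤ 2 * C * σ ^ 2 * D k + 2 * A k + 2 * (σ ^ 2 / (N:ℝ)) := by
      calc ∫ ω, ‖ghat k ω‖ ^ 2 ∂P ≤ 2 * C * σ ^ 2 * D k + 2 * A k + 2 * σ ^ 2 / N := hIh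
        _ = 2 * C * σ ^ 2 * D k + 2 * A k + 2 * (σ ^ 2 / (N:ℝ)) := by ring
    have hfin := step_arith γ L C σ (σ ^ 2 / (N:ℝ)) (G (k + 1)) (∫ ω, f (x k ω) ∂P)
      (∫ ω, (inner ℝ (gradient f (x k ω)) (ghat k ω) : ℝ) ∂P)
      (∫ ω, ‖ghat k ω - gbar k ω‖ ^ 2 ∂P) (∫ ω, ‖ghat k ω‖ ^ 2 ∂P) (A k) (D k)
      hγ hL.le hLγ2 hCσ (hAnn k) (hDnn k hk) hGk1 hIah_lb hIdev hIh'
    rw [hGkk]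
    have e2 : L * γ ^ 2 * σ ^ 2 / (N:ℝ) = L * γ ^ 2 * (σ ^ 2 / (N:ℝ)) := by ring
    rw [e2]
    exact hfin
  -- telescoping
  have hstep' : ∀ k ∈ Finset.range K, γ / 4 * A k
      ≤ (G k - G (k + 1)) + ((3 * γ / 4) * (C * σ ^ 2) * D k + L * γ ^ 2 * σ ^ 2 / N) := by
    intro k hk
    have := step k (Finset.mem_range.mp hk)
    linarith
  have h1 := Finset.sum_le_sum hstep'
  rw [← Finset.mul_sum, Finset.sum_add_distrib, Finset.sum_range_sub',
    Finset.sum_add_distrib, ← Finset.mul_sum, Finset.sum_const, Finset.card_range,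
    nsmul_eq_mul] at h1
  have hG0 : G 0 = f x0 := by
    have h2 : G 0 = ∫ ω, f (x 0 ω) ∂P := by simp [hG, hK]
    rw [h2, hx0]
    simp
  have hGK : G K = fstar := by simp [hG]
  have hsumD : ∑ k ∈ Finset.range K, D k ≤ B := by
    calc ∑ k ∈ Finset.range K, D k
        = ∫ ω, (∑ k ∈ Finset.range K, δhat k ω) ∂P :=
          (integral_finset_sum _ (fun k hk => hδint k (Finset.mem_range.mp hk))).symm
      _ ≤ B := hB
  have hsumDnn : 0 ≤ ∑ k ∈ Finset.range K, D k :=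
    Finset.sum_nonneg (fun k hk => hDnn k (Finset.mem_range.mp hk))
  have hBnn : 0 ≤ B := le_trans hsumDnn hsumD
  have hmono : (3 * γ / 4) * (C * σ ^ 2) * (∑ k ∈ Finset.range K, D k)
      ≤ (3 * γ / 4) * (C * σ ^ 2) * B :=
    mul_le_mul_of_nonneg_left hsumD (by positivity)
  have hmain : γ / 4 * (∑ k ∈ Finset.range K, A k)
      ≤ (f x0 - fstar) + (3 * γ / 4) * (C * σ ^ 2) * B + K * (L * γ ^ 2 * σ ^ 2 / N) := by
    rw [hG0, hGK] at h1
    linarith [h1, hmono]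
  have hS : ∑ k ∈ Finset.range K, A k
      ≤ 4 * (f x0 - fstar) / γ + 3 * (C * σ ^ 2) * B + 4 * (K:ℝ) * (L * γ * σ ^ 2 / N) := by
    have h2 := mul_le_mul_of_nonneg_left hmain (by positivity : (0:ℝ) ≤ 4 / γ)
    calc ∑ k ∈ Finset.range K, A k
        = (4 / γ) * (γ / 4 * ∑ k ∈ Finset.range K, A k) := by
          field_simp
      _ ≤ (4 / γ) * ((f x0 - fstar) + (3 * γ / 4) * (C * σ ^ 2) * B
            + K * (L * γ ^ 2 * σ ^ 2 / N)) := h2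
      _ = 4 * (f x0 - fstar) / γ + 3 * (C * σ ^ 2) * B + 4 * (K:ℝ) * (L * γ * σ ^ 2 / N) := by
          field_simp
  show (1 / K : ℝ) * ∑ k ∈ Finset.range K, A k
      ≤ 4 * (f x0 - fstar) / (γ * K) + 8 * C * σ ^ 2 * B / K + 4 * L * γ * σ ^ 2 / N
  calc (1 / K : ℝ) * ∑ k ∈ Finset.range K, A k
      ≤ (1 / K : ℝ) * (4 * (f x0 - fstar) / γ + 3 * (C * σ ^ 2) * B
          + 4 * (K:ℝ) * (L * γ * σ ^ 2 / N)) :=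
        mul_le_mul_of_nonneg_left hS (by positivity)
    _ = 4 * (f x0 - fstar) / (γ * K) + 3 * C * σ ^ 2 * B / K + 4 * L * γ * σ ^ 2 / N := by
        field_simp
    _ ≤ 4 * (f x0 - fstar) / (γ * K) + 8 * C * σ ^ 2 * B / K + 4 * L * γ * σ ^ 2 / N := by
        have h3 : 3 * C * σ ^ 2 * B ≤ 8 * C * σ ^ 2 * B := by
          nlinarith [mul_nonneg (mul_nonneg hC (sq_nonneg σ)) hBnn]
        have h4 : 3 * C * σ ^ 2 * B / K ≤ 8 * C * σ ^ 2 * B / K :=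
          (div_le_div_iff_of_pos_right hKpos).mpr h3
        linarith
end
end

section
/- Let f : ℝ^d → ℝ be L-smooth and convex with minimizer x*, let x ∈ ℝ^d, let 0 < γ ≤ 1/(4L), and let C, δ, σ ≥ 0 and N ≥ 1. Let ĝ and ḡ be random vectors in ℝ^d with E[ḡ] = ∇f(x), E[‖ĝ − ḡ‖²] ≤ C·δ·σ², and E[‖ĝ‖²] ≤ 2C·δ·σ² + 2‖∇f(x)‖² + 2σ²/N. Then E[‖x − γĝ − x*‖²] ≤ ‖x − x*‖² − γ·(f(x) − f(x*)) + 2γ·√(Cδ)·σ·‖x − x*‖ + 2γ²·C·δ·σ² + 2γ²·σ²/N. -/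
/-! Expanding the square, `E‖x - γĝ - x*‖² = ‖x - x*‖² - 2γ⟪x - x*, Eĝ⟫ + γ² E‖ĝ‖²`, and
`Eĝ = ∇f(x) + b` with a bias `b = E[ĝ - ḡ]` satisfying `‖b‖² ≤ E‖ĝ - ḡ‖² ≤ Cδσ²`.
Convexity gives `⟪x - x*, ∇f(x)⟫ ≥ f(x) - f(x*)`, Cauchy–Schwarz bounds `⟪x - x*, b⟫`, and
`L`-smoothness at a minimizer gives `‖∇f(x)‖² ≤ 2L(f(x) - f(x*))`; since `4Lγ ≤ 1`, the term
`2γ²‖∇f(x)‖²` of the second-moment bound is then absorbed by half of `2γ(f(x) - f(x*))`. -/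

open MeasureTheory RealInnerProductSpace

section Gradient

variable {E : Type*} [NormedAddCommGroup E] [InnerProductSpace ℝ E] [CompleteSpace E]
  {f : E → ℝ} {L : ℝ}

theorem hasDerivAt_comp_add_smul {x v : E} {t : ℝ} (hf : DifferentiableAt ℝ f (x + t • v)) :
    HasDerivAt (fun s : ℝ => f (x + s • v)) ⟪gradient f (x + t • v), v⟫ t := by
  have hline : HasDerivAt (fun s : ℝ => x + s • v) v t := by
    simpa using ((hasDerivAt_id t).smul_const v).const_add x
  exact ((hasGradientAt_iff_hasFDerivAt.mp hf.hasGradientAt).comp_hasDerivAt t hline).congr_deriv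
    (by simp)

theorem ConvexOn.sub_le_inner_gradient (hconv : ConvexOn ℝ Set.univ f)
    {x : E} (hf : DifferentiableAt ℝ f x) (y : E) :
    f x - f y ≤ ⟪gradient f x, x - y⟫ := by
  have hline : ConvexOn ℝ Set.univ (fun s : ℝ => f (x + s • (y - x))) := by
    simpa [AffineMap.lineMap_apply, Function.comp_def, add_comm] using
      hconv.comp_affineMap (AffineMap.lineMap x y)
  have hderiv := hasDerivAt_comp_add_smul (t := 0) (v := y - x) (by simpa using hf)
  have := hline.le_slope_of_hasDerivAt (Set.mem_univ 0) (Set.mem_univ 1) one_pos hderiv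
  simp only [zero_smul, add_zero, slope_def_field, one_smul, add_sub_cancel] at this
  rw [← neg_sub y x, inner_neg_right]
  linarith

theorem le_add_inner_gradient_add_sq (hf : Differentiable ℝ f)
    (hsmooth : ∀ y z, ‖gradient f y - gradient f z‖ ≤ L * ‖y - z‖) (x v : E) :
    f (x + v) ≤ f x + ⟪gradient f x, v⟫ + L / 2 * ‖v‖ ^ 2 := by
  set ψ : ℝ → ℝ := fun t => f (x + t • v) - t * ⟪gradient f x, v⟫ - L / 2 * t ^ 2 * ‖v‖ ^ 2
  have hψ (t : ℝ) :
      HasDerivAt ψ (⟪gradient f (x + t • v) - gradient f x, v⟫ - L * t * ‖v‖ ^ 2) t := by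
    have := ((hasDerivAt_comp_add_smul (hf (x + t • v))).sub
      ((hasDerivAt_id t).mul_const ⟪gradient f x, v⟫)).sub
      (((hasDerivAt_pow 2 t).const_mul (L / 2)).mul_const (‖v‖ ^ 2))
    exact this.congr_deriv (by rw [inner_sub_left]; ring)
  have hψ_nonpos : ∀ t ∈ interior (Set.Icc (0 : ℝ) 1),
      ⟪gradient f (x + t • v) - gradient f x, v⟫ - L * t * ‖v‖ ^ 2 ≤ 0 := by
    intro t ht
    rw [interior_Icc] at ht
    have := calc ⟪gradient f (x + t • v) - gradient f x, v⟫
        ≤ ‖gradient f (x + t • v) - gradient f x‖ * ‖v‖ := real_inner_le_norm _ _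
      _ ≤ L * ‖x + t • v - x‖ * ‖v‖ := by gcongr; exact hsmooth _ _
      _ = L * t * ‖v‖ ^ 2 := by
        rw [add_sub_cancel_left, norm_smul, Real.norm_of_nonneg ht.1.le]; ring
    linarith
  have hanti := antitoneOn_of_hasDerivWithinAt_nonpos (convex_Icc 0 1)
    (fun t _ => (hψ t).continuousAt.continuousWithinAt)
    (fun t _ => (hψ t).hasDerivWithinAt) hψ_nonpos
  have := hanti (Set.left_mem_Icc.mpr zero_le_one) (Set.right_mem_Icc.mpr zero_le_one) zero_le_one
  simp only [ψ, one_smul, zero_smul, add_zero] at this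
  linarith

theorem norm_gradient_sq_le_two_mul_sub (hL : 0 < L) (hf : Differentiable ℝ f)
    (hsmooth : ∀ y z, ‖gradient f y - gradient f z‖ ≤ L * ‖y - z‖)
    {xstar : E} (hmin : ∀ y, f xstar ≤ f y) (x : E) :
    ‖gradient f x‖ ^ 2 ≤ 2 * L * (f x - f xstar) := by
  have hstep := le_add_inner_gradient_add_sq hf hsmooth x (-L⁻¹ • gradient f x)
  rw [inner_smul_right, real_inner_self_eq_norm_sq, norm_smul, norm_neg,
    Real.norm_of_nonneg (inv_nonneg.mpr hL.le)] at hstep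
  have hdecrease : f xstar ≤ f x - ‖gradient f x‖ ^ 2 / (2 * L) := by
    refine (hmin _).trans (hstep.trans_eq ?_)
    field_simp
    ring
  rw [le_sub_comm, div_le_iff₀ (by positivity)] at hdecrease
  linarith

end Gradient

section SecondMoment

variable {Ω E : Type*} [MeasurableSpace Ω] {P : Measure Ω} [IsProbabilityMeasure P]
  [NormedAddCommGroup E] [InnerProductSpace ℝ E] [CompleteSpace E]
  {g : Ω → E}

theorem integral_norm_sub_smul_sq (hg : Integrable g P)
    (hg2 : Integrable (fun ω => ‖g ω‖ ^ 2) P) (a : E) (γ : ℝ) :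
    ∫ ω, ‖a - γ • g ω‖ ^ 2 ∂P
      = ‖a‖ ^ 2 - 2 * γ * ⟪a, ∫ ω, g ω ∂P⟫ + γ ^ 2 * ∫ ω, ‖g ω‖ ^ 2 ∂P := by
  have hpointwise (ω : Ω) :
      ‖a - γ • g ω‖ ^ 2 = ‖a‖ ^ 2 - 2 * γ * ⟪a, g ω⟫ + γ ^ 2 * ‖g ω‖ ^ 2 := by
    rw [norm_sub_sq_real, real_inner_smul_right, norm_smul, mul_pow, Real.norm_eq_abs, sq_abs]
    ring
  have hinner : Integrable (fun ω => 2 * γ * ⟪a, g ω⟫) P := (hg.const_inner a).const_mul _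
  have hlinear : Integrable (fun ω => ‖a‖ ^ 2 - 2 * γ * ⟪a, g ω⟫) P :=
    (integrable_const _).sub hinner
  simp_rw [hpointwise]
  rw [integral_add hlinear (hg2.const_mul _),
    integral_sub (integrable_const _) hinner, integral_const, integral_const_mul,
    integral_const_mul, integral_inner hg]
  simp

theorem norm_integral_sq_le_integral_norm_sq (hg : Integrable g P)
    (hg2 : Integrable (fun ω => ‖g ω‖ ^ 2) P) :
    ‖∫ ω, g ω ∂P‖ ^ 2 ≤ ∫ ω, ‖g ω‖ ^ 2 ∂P := by
  have hvar := integral_norm_sub_smul_sq hg hg2 (∫ ω, g ω ∂P) 1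
  rw [real_inner_self_eq_norm_sq] at hvar
  have : 0 ≤ ∫ ω, ‖∫ ω, g ω ∂P - (1 : ℝ) • g ω‖ ^ 2 ∂P := integral_nonneg fun _ => sq_nonneg _
  linarith

end SecondMoment

theorem btard_sgd_one_step_convex_general
    {Ω : Type*} [MeasurableSpace Ω] (P : Measure Ω) [IsProbabilityMeasure P]
    {d : ℕ} (f : EuclideanSpace ℝ (Fin d) → ℝ) (L : ℝ) (hL : 0 < L)
    (hdiff : Differentiable ℝ f)
    (hsmooth : ∀ y z, ‖gradient f y - gradient f z‖ ≤ L * ‖y - z‖)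
    (hconv : ConvexOn ℝ Set.univ f)
    (xstar : EuclideanSpace ℝ (Fin d)) (hmin : ∀ y, f xstar ≤ f y)
    (x : EuclideanSpace ℝ (Fin d)) (γ C δ σ : ℝ) (N : ℕ)
    (hγ : 0 < γ) (hγL : γ ≤ 1 / (4 * L)) (hσ : 0 ≤ σ)
    (ghat gbar : Ω → EuclideanSpace ℝ (Fin d))
    (hghatint : Integrable ghat P) (hgbarint : Integrable gbar P)
    (hdevint : Integrable (fun ω => ‖ghat ω - gbar ω‖ ^ 2) P)
    (hsecint : Integrable (fun ω => ‖ghat ω‖ ^ 2) P)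
    (hmean : ∫ ω, gbar ω ∂P = gradient f x)
    (hdev : ∫ ω, ‖ghat ω - gbar ω‖ ^ 2 ∂P ≤ C * δ * σ ^ 2)
    (hsec : ∫ ω, ‖ghat ω‖ ^ 2 ∂P
      ≤ 2 * C * δ * σ ^ 2 + 2 * ‖gradient f x‖ ^ 2 + 2 * σ ^ 2 / N) :
    ∫ ω, ‖x - γ • ghat ω - xstar‖ ^ 2 ∂P
      ≤ ‖x - xstar‖ ^ 2 - γ * (f x - f xstar)
        + 2 * γ * Real.sqrt (C * δ) * σ * ‖x - xstar‖
        + 2 * γ ^ 2 * C * δ * σ ^ 2 + 2 * γ ^ 2 * σ ^ 2 / N := by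
  set a := x - xstar
  set bias := ∫ ω, (ghat ω - gbar ω) ∂P with hbias_def
  have hexpand : ∫ ω, ‖x - γ • ghat ω - xstar‖ ^ 2 ∂P
      = ‖a‖ ^ 2 - 2 * γ * ⟪a, ∫ ω, ghat ω ∂P⟫ + γ ^ 2 * ∫ ω, ‖ghat ω‖ ^ 2 ∂P := by
    simpa only [sub_right_comm] using integral_norm_sub_smul_sq hghatint hsecint a γ
  have hmean_ghat : ∫ ω, ghat ω ∂P = gradient f x + bias := by
    rw [hbias_def, integral_sub hghatint hgbarint, hmean, add_sub_cancel]
  have hbias : ‖bias‖ ≤ Real.sqrt (C * δ) * σ := by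
    rw [← Real.sqrt_sq (norm_nonneg bias), ← abs_of_nonneg hσ, ← Real.sqrt_sq_eq_abs,
      ← Real.sqrt_mul' _ (sq_nonneg σ)]
    exact Real.sqrt_le_sqrt
      ((norm_integral_sq_le_integral_norm_sq (hghatint.sub hgbarint) hdevint).trans hdev)
  have hdescent : f x - f xstar ≤ ⟪a, gradient f x⟫ := by
    rw [real_inner_comm]; exact hconv.sub_le_inner_gradient (hdiff x) xstar
  have hbias_inner : -(‖a‖ * ‖bias‖) ≤ ⟪a, bias⟫ :=
    neg_le_of_abs_le (abs_real_inner_le_norm a bias)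
  have hgrad := norm_gradient_sq_le_two_mul_sub hL hdiff hsmooth hmin x
  have hγL' : 4 * L * γ ≤ 1 := by rwa [le_div_iff₀ (by positivity), mul_comm] at hγL
  have hgap : 0 ≤ f x - f xstar := sub_nonneg.mpr (hmin x)
  rw [hexpand, hmean_ghat, inner_add_right]
  linear_combination mul_le_mul_of_nonneg_left hsec (sq_nonneg γ)
    + 2 * mul_le_mul_of_nonneg_left hgrad (sq_nonneg γ)
    + mul_nonneg (mul_nonneg hγ.le hgap) (sub_nonneg.mpr hγL')
    + 2 * mul_le_mul_of_nonneg_left hdescent hγ.le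
    + 2 * mul_le_mul_of_nonneg_left hbias_inner hγ.le
    + 2 * mul_le_mul_of_nonneg_left hbias (mul_nonneg hγ.le (norm_nonneg a))

/-- One-step distance-decrease inequality for an SGD step with a robustly
aggregated gradient estimate `ĝ`, for `f` `L`-smooth and convex with minimizer `x*`:
`E[‖x − γĝ − x*‖²] ≤ ‖x − x*‖² − γ(f(x) − f(x*)) + 2γ√(Cδ)σ‖x − x*‖ + 2γ²Cδσ² + 2γ²σ²/N`. -/
theorem btard_sgd_one_step_convex
    {Ω : Type*} [MeasurableSpace Ω] (P : Measure Ω) [IsProbabilityMeasure P]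
    {d : ℕ} (f : EuclideanSpace ℝ (Fin d) → ℝ) (L : ℝ) (hL : 0 < L)
    (hdiff : Differentiable ℝ f)
    (hsmooth : ∀ y z, ‖gradient f y - gradient f z‖ ≤ L * ‖y - z‖)
    (hconv : ConvexOn ℝ Set.univ f)
    (xstar : EuclideanSpace ℝ (Fin d)) (hmin : ∀ y, f xstar ≤ f y)
    (x : EuclideanSpace ℝ (Fin d)) (γ C δ σ : ℝ) (N : ℕ) (hN : 1 ≤ N)
    (hγ : 0 < γ) (hγL : γ ≤ 1 / (4 * L)) (hC : 0 ≤ C) (hδ : 0 ≤ δ) (hσ : 0 ≤ σ)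
    (ghat gbar : Ω → EuclideanSpace ℝ (Fin d))
    (hghatint : Integrable ghat P) (hgbarint : Integrable gbar P)
    (hdevint : Integrable (fun ω => ‖ghat ω - gbar ω‖ ^ 2) P)
    (hsecint : Integrable (fun ω => ‖ghat ω‖ ^ 2) P)
    (hmean : ∫ ω, gbar ω ∂P = gradient f x)
    (hdev : ∫ ω, ‖ghat ω - gbar ω‖ ^ 2 ∂P ≤ C * δ * σ ^ 2)
    (hsec : ∫ ω, ‖ghat ω‖ ^ 2 ∂P
      ≤ 2 * C * δ * σ ^ 2 + 2 * ‖gradient f x‖ ^ 2 + 2 * σ ^ 2 / N) :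
    ∫ ω, ‖x - γ • ghat ω - xstar‖ ^ 2 ∂P
      ≤ ‖x - xstar‖ ^ 2 - γ * (f x - f xstar)
        + 2 * γ * Real.sqrt (C * δ) * σ * ‖x - xstar‖
        + 2 * γ ^ 2 * C * δ * σ ^ 2 + 2 * γ ^ 2 * σ ^ 2 / N :=
  btard_sgd_one_step_convex_general P f L hL hdiff hsmooth hconv xstar hmin x γ C δ σ N hγ hγL hσ
    ghat gbar hghatint hgbarint hdevint hsecint hmean hdev hsec
end

section
/- Let μ > 0, c > 0, ε > 0, let f : ℝ^d → ℝ be μ-strongly convex with minimizer x* and ∇f(x*) = 0, and let R₀ ≥ ‖x⁰ − x*‖ with μR₀² > 2ε. Let (x̂^t)_{t≥0} be a sequence of random vectors with x̂⁰ = x⁰ such that for every t ≥ 1 there are γ_t, K_t > 0 with γ_t·K_t ≥ 4c/μ and E[f(x̂^t) − f(x*) | x̂^{t−1}] ≤ c·‖x̂^{t−1} − x*‖²/(γ_t·K_t). Then for every t ≥ 1, E[f(x̂^t) − f(x*)] ≤ μR₀²/2^{t+1} and E[‖x̂^t − x*‖²] ≤ R₀²/2^t; in particular, after r = ⌈log₂(μR₀²/ε)⌉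 − 1 restarts, E[f(x̂^r) − f(x*)] ≤ ε. -/
/-!
Write `D t = E‖x̂ᵗ − x*‖²` and `F t = E[f(x̂ᵗ) − f(x*)]`. Taking expectations in the stage
guarantee and using `γₜKₜ ≥ 4c/μ` gives `F (t+1) ≤ (μ/4) D t`, while strong convexity at the
minimizer (where the gradient vanishes) gives `(μ/2) D t ≤ F t`. Together, `D` halves at every
restart, so `D t ≤ R₀²/2ᵗ` and `F (t+1) ≤ μR₀²/2^(t+2)`; the choice of `r` makes `2^(r+1)` at least
`μR₀²/ε`.
-/

open MeasureTheory ProbabilityTheory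
open scoped RealInnerProductSpace

noncomputable section

theorem half_mul_sq_norm_sub_le_sub_of_gradient_eq_zero {E : Type*} [NormedAddCommGroup E]
    [InnerProductSpace ℝ E] [CompleteSpace E] {f : E → ℝ} {μ : ℝ} {x : E}
    (hsc : ∀ z, f x + ⟪gradient f x, z - x⟫ + (μ / 2) * ‖z - x‖ ^ 2 ≤ f z)
    (hx : gradient f x = 0) (z : E) :
    (μ / 2) * ‖z - x‖ ^ 2 ≤ f z - f x := by
  have := hsc z
  rw [hx, inner_zero_left, add_zero] at this
  linarith

theorem half_mul_integral_sq_norm_sub_le_integral_sub {E Ω : Type*} [NormedAddCommGroup E]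
    [MeasurableSpace Ω] {P : Measure Ω} [IsFiniteMeasure P] {f : E → ℝ} {μ : ℝ} {x : E}
    {X : Ω → E} (hlow : ∀ z, (μ / 2) * ‖z - x‖ ^ 2 ≤ f z - f x)
    (hf : Integrable (fun ω => f (X ω)) P) (hdist : Integrable (fun ω => ‖X ω - x‖ ^ 2) P) :
    (μ / 2) * ∫ ω, ‖X ω - x‖ ^ 2 ∂P ≤ ∫ ω, (f (X ω) - f x) ∂P := by
  rw [← integral_const_mul]
  exact integral_mono (hdist.const_mul _) (hf.sub (integrable_const _)) fun ω => hlow (X ω)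

theorem integral_le_integral_of_condExp_le {Ω : Type*} {m m₀ : MeasurableSpace Ω}
    {P : Measure Ω} (hm : m ≤ m₀) [SigmaFinite (P.trim hm)] {X Y : Ω → ℝ}
    (hY : Integrable Y P) (hXY : ∀ᵐ ω ∂P, P[X|m] ω ≤ Y ω) :
    ∫ ω, X ω ∂P ≤ ∫ ω, Y ω ∂P := by
  rw [← integral_condExp hm]
  exact integral_mono_ae integrable_condExp hY hXY

section Restart

variable {F D : ℕ → ℝ} {μ R : ℝ}

theorem restart_sq_dist_le (hμ : 0 < μ) (hD0 : D 0 ≤ R ^ 2)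
    (hF : ∀ t, F (t + 1) ≤ μ / 4 * D t) (hD : ∀ t, μ / 2 * D t ≤ F t) (t : ℕ) :
    D t ≤ R ^ 2 / 2 ^ t := by
  induction t with
  | zero => simpa using hD0
  | succ t ih =>
    have halve : μ / 2 * D (t + 1) ≤ μ / 2 * (D t / 2) := by
      linarith [hD (t + 1), hF t]
    calc D (t + 1) ≤ D t / 2 := le_of_mul_le_mul_left halve (by positivity)
      _ ≤ R ^ 2 / 2 ^ t / 2 := by gcongr
      _ = R ^ 2 / 2 ^ (t + 1) := by ring

theorem restart_gap_le (hμ : 0 < μ) (hD0 : D 0 ≤ R ^ 2)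
    (hF : ∀ t, F (t + 1) ≤ μ / 4 * D t) (hD : ∀ t, μ / 2 * D t ≤ F t) (t : ℕ) :
    F (t + 1) ≤ μ * R ^ 2 / 2 ^ (t + 2) :=
  calc F (t + 1) ≤ μ / 4 * D t := hF t
    _ ≤ μ / 4 * (R ^ 2 / 2 ^ t) := by gcongr; exact restart_sq_dist_le hμ hD0 hF hD t
    _ = μ * R ^ 2 / 2 ^ (t + 2) := by ring

end Restart

theorem le_two_pow_ceil_logb {x : ℝ} (hx : 0 < x) : x ≤ 2 ^ ⌈Real.logb 2 x⌉₊ := by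
  rw [← Real.rpow_natCast, ← Real.logb_le_iff_le_rpow one_lt_two hx]
  exact Nat.le_ceil _

theorem two_le_ceil_logb {x : ℝ} (hx : 2 < x) : 2 ≤ ⌈Real.logb 2 x⌉₊ := by
  refine Nat.lt_ceil.2 ?_
  rw [Nat.cast_one, Real.lt_logb_iff_rpow_lt one_lt_two (by linarith), Real.rpow_one]
  exact hx

theorem exists_ceil_logb_div_eq_add_two {a ε : ℝ} (hε : 0 < ε) (h : 2 * ε < a) :
    ∃ s, ⌈Real.logb 2 (a / ε)⌉₊ = s + 2 ∧ a / 2 ^ (s + 2) ≤ ε := by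
  have hratio : 2 < a / ε := (lt_div_iff₀ hε).2 h
  obtain ⟨s, hs⟩ := Nat.exists_eq_add_of_le' (two_le_ceil_logb hratio)
  refine ⟨s, hs, ?_⟩
  rw [div_le_iff₀ (by positivity), ← div_le_iff₀' hε, ← hs]
  exact le_two_pow_ceil_logb (by linarith)

theorem restarted_btard_sgd_general
    {Ω : Type*} [MeasurableSpace Ω] (P : Measure Ω) [IsProbabilityMeasure P]
    {d : ℕ} (f : EuclideanSpace ℝ (Fin d) → ℝ) (μ c ε R₀ : ℝ)
    (hμ : 0 < μ) (hε : 0 < ε)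
    (hsc : ∀ y z : EuclideanSpace ℝ (Fin d),
      f y + ⟪gradient f y, z - y⟫ + (μ / 2) * ‖z - y‖ ^ 2 ≤ f z)
    (xstar : EuclideanSpace ℝ (Fin d))
    (hgradstar : gradient f xstar = 0)
    (x0 : EuclideanSpace ℝ (Fin d)) (hR₀ : ‖x0 - xstar‖ ≤ R₀)
    (hbig : 2 * ε < μ * R₀ ^ 2)
    (xhat : ℕ → Ω → EuclideanSpace ℝ (Fin d)) (γ K : ℕ → ℝ)
    (hxhat0 : xhat 0 = fun _ => x0)
    (hxmeas : ∀ t, Measurable (xhat t))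
    (hfint : ∀ t, Integrable (fun ω => f (xhat t ω)) P)
    (hdistint : ∀ t, Integrable (fun ω => ‖xhat t ω - xstar‖ ^ 2) P)
    (hγK : ∀ t : ℕ, 1 ≤ t → 0 < γ t ∧ 0 < K t ∧ 4 * c / μ ≤ γ t * K t)
    (hstage : ∀ t : ℕ, 1 ≤ t → ∀ᵐ ω ∂P,
      (P[fun ω' => f (xhat t ω') - f xstar|
          MeasurableSpace.comap (xhat (t - 1)) inferInstance]) ω
        ≤ c * ‖xhat (t - 1) ω - xstar‖ ^ 2 / (γ t * K t)) :
    (∀ t : ℕ, 1 ≤ t →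
      (∫ ω, (f (xhat t ω) - f xstar) ∂P) ≤ μ * R₀ ^ 2 / 2 ^ (t + 1) ∧
      (∫ ω, ‖xhat t ω - xstar‖ ^ 2 ∂P) ≤ R₀ ^ 2 / 2 ^ t) ∧
    (∫ ω, (f (xhat (⌈Real.logb 2 (μ * R₀ ^ 2 / ε)⌉₊ - 1) ω) - f xstar) ∂P) ≤ ε := by
  have hD0 : ∫ ω, ‖xhat 0 ω - xstar‖ ^ 2 ∂P ≤ R₀ ^ 2 := by
    rw [hxhat0, integral_const, probReal_univ, one_smul]
    gcongr
  have hF : ∀ t, ∫ ω, (f (xhat (t + 1) ω) - f xstar) ∂P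
      ≤ μ / 4 * ∫ ω, ‖xhat t ω - xstar‖ ^ 2 ∂P := fun t => by
    obtain ⟨hγ, hK, hγK⟩ := hγK (t + 1) le_add_self
    have hcoef : c / (γ (t + 1) * K (t + 1)) ≤ μ / 4 := by
      rw [div_le_iff₀ hμ] at hγK
      rw [div_le_div_iff₀ (by positivity) four_pos]
      linarith
    calc ∫ ω, (f (xhat (t + 1) ω) - f xstar) ∂P
        ≤ ∫ ω, c * ‖xhat t ω - xstar‖ ^ 2 / (γ (t + 1) * K (t + 1)) ∂P :=
          integral_le_integral_of_condExp_le (hxmeas t).comap_le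
            (((hdistint t).const_mul c).div_const _)
            (by simpa only [Nat.add_sub_cancel] using hstage (t + 1) le_add_self)
      _ = c / (γ (t + 1) * K (t + 1)) * ∫ ω, ‖xhat t ω - xstar‖ ^ 2 ∂P := by
          rw [integral_div, integral_const_mul, mul_div_right_comm]
      _ ≤ μ / 4 * ∫ ω, ‖xhat t ω - xstar‖ ^ 2 ∂P := by gcongr
  have hD t := half_mul_integral_sq_norm_sub_le_integral_sub
    (half_mul_sq_norm_sub_le_sub_of_gradient_eq_zero (hsc xstar) hgradstar) (hfint t) (hdistint t)
  refine ⟨fun t ht => ?_, ?_⟩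
  · obtain ⟨s, rfl⟩ := Nat.exists_eq_add_of_le' ht
    exact ⟨restart_gap_le hμ hD0 hF hD s, restart_sq_dist_le hμ hD0 hF hD (s + 1)⟩
  · obtain ⟨s, hs, hle⟩ := exists_ceil_logb_div_eq_add_two hε hbig
    rw [hs, show s + 2 - 1 = s + 1 by omega]
    exact (restart_gap_le hμ hD0 hF hD s).trans hle

/-- The restart argument underlying Restarted-BTARD-SGD: if each stage `t`
satisfies `E[f(x̂^t) − f(x*) | x̂^{t−1}] ≤ c‖x̂^{t−1} − x*‖²/(γ_t K_t)` with
`γ_t K_t ≥ 4c/μ`, then `E[f(x̂^t) − f(x*)] ≤ μR₀²/2^{t+1}` and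
`E[‖x̂^t − x*‖²] ≤ R₀²/2^t` for all `t ≥ 1`; in particular, after
`r = ⌈log₂(μR₀²/ε)⌉ − 1` restarts, `E[f(x̂^r) − f(x*)] ≤ ε`. -/
theorem restarted_btard_sgd
    {Ω : Type*} [MeasurableSpace Ω] (P : Measure Ω) [IsProbabilityMeasure P]
    {d : ℕ} (f : EuclideanSpace ℝ (Fin d) → ℝ) (μ c ε R₀ : ℝ)
    (hμ : 0 < μ) (hc : 0 < c) (hε : 0 < ε)
    (hdiff : Differentiable ℝ f)
    (hsc : ∀ y z : EuclideanSpace ℝ (Fin d),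
      f y + ⟪gradient f y, z - y⟫ + (μ / 2) * ‖z - y‖ ^ 2 ≤ f z)
    (xstar : EuclideanSpace ℝ (Fin d)) (hmin : ∀ y, f xstar ≤ f y)
    (hgradstar : gradient f xstar = 0)
    (x0 : EuclideanSpace ℝ (Fin d)) (hR₀ : ‖x0 - xstar‖ ≤ R₀)
    (hbig : 2 * ε < μ * R₀ ^ 2)
    (xhat : ℕ → Ω → EuclideanSpace ℝ (Fin d)) (γ K : ℕ → ℝ)
    (hxhat0 : xhat 0 = fun _ => x0)
    (hxmeas : ∀ t, Measurable (xhat t))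
    (hfint : ∀ t, Integrable (fun ω => f (xhat t ω)) P)
    (hdistint : ∀ t, Integrable (fun ω => ‖xhat t ω - xstar‖ ^ 2) P)
    (hγK : ∀ t : ℕ, 1 ≤ t → 0 < γ t ∧ 0 < K t ∧ 4 * c / μ ≤ γ t * K t)
    (hstage : ∀ t : ℕ, 1 ≤ t → ∀ᵐ ω ∂P,
      (P[fun ω' => f (xhat t ω') - f xstar|
          MeasurableSpace.comap (xhat (t - 1)) inferInstance]) ω
        ≤ c * ‖xhat (t - 1) ω - xstar‖ ^ 2 / (γ t * K t)) :
    (∀ t : ℕ, 1 ≤ t →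
      (∫ ω, (f (xhat t ω) - f xstar) ∂P) ≤ μ * R₀ ^ 2 / 2 ^ (t + 1) ∧
      (∫ ω, ‖xhat t ω - xstar‖ ^ 2 ∂P) ≤ R₀ ^ 2 / 2 ^ t) ∧
    (∫ ω, (f (xhat (⌈Real.logb 2 (μ * R₀ ^ 2 / ε)⌉₊ - 1) ω) - f xstar) ∂P) ≤ ε :=
  restarted_btard_sgd_general P f μ c ε R₀ hμ hε hsc xstar hgradstar x0 hR₀ hbig xhat γ K hxhat0
    hxmeas hfint hdistint hγK hstage
end
end

section
/- Let Q ⊆ ℝ^d be a nonempty closed convex set, let f : ℝ^d → ℝ be convex and differentiable with a minimizer x* ∈ Q, and let R₀ ≥ ‖x⁰ − x*‖ with x⁰ ∈ Q. Let A, B ≥ 0 and γ > 0. Let (F_k)_{k≥0} be a filtration and, for k = 0, …, K−1, let x^k be F_k-measurable, δ̂_k nonnegative and F_k-measurable, and ĝ^k, ḡ^k random vectors with E[ḡ^k | F_k] = ∇f(x^k), E[‖ĝ^k − ḡ^k‖² | F_k] ≤ δ̂_k·A, E[‖ĝ^k‖² | F_k] ≤ 2δ̂_k·A + 2B, and x^{k+1}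 = proj_Q(x^k − γ·ĝ^k). Suppose also: (i) 2γ²·B·K ≤ R₀²/3, (ii) 2√2·γ·√A·R₀·∑_{k=0}^{K−1}√(E[δ̂_k]) ≤ R₀²/3, and (iii) 2γ²·A·∑_{k=0}^{K−1}E[δ̂_k] ≤ R₀²/3. Then E[f(x̄^K) − f(x*)] ≤ R₀²/(γK), where x̄^K = (1/K)·∑_{k=0}^{K−1} x^k. -/
open MeasureTheory ProbabilityTheory
open scoped RealInnerProductSpace

noncomputable section

section helpers

variable {Ω : Type*} {mΩ : MeasurableSpace Ω} {P : Measure Ω}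
variable {E : Type*} [NormedAddCommGroup E] [InnerProductSpace ℝ E]

lemma aux_integrable_mul {u w : Ω → ℝ} (hu : MemLp u 2 P) (hw : MemLp w 2 P) :
    Integrable (fun ω => u ω * w ω) P := by
  refine ((hu.integrable_sq.add hw.integrable_sq).div_const 2).mono'
    (hu.aestronglyMeasurable.mul hw.aestronglyMeasurable) ?_
  filter_upwards with ω
  simp only [Pi.add_apply]
  rw [Real.norm_eq_abs, abs_mul]
  nlinarith [sq_nonneg (|u ω| - |w ω|), sq_abs (u ω), sq_abs (w ω),
    abs_nonneg (u ω), abs_nonneg (w ω)]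

lemma aux_integrable_inner {u w : Ω → E} (hu : MemLp u 2 P) (hw : MemLp w 2 P) :
    Integrable (fun ω => ⟪u ω, w ω⟫) P := by
  have h1 : Integrable (fun ω => ‖u ω‖ ^ 2) P :=
    (memLp_two_iff_integrable_sq_norm hu.aestronglyMeasurable).mp hu
  have h2 : Integrable (fun ω => ‖w ω‖ ^ 2) P :=
    (memLp_two_iff_integrable_sq_norm hw.aestronglyMeasurable).mp hw
  refine ((h1.add h2).div_const 2).mono'
    (AEStronglyMeasurable.inner hu.aestronglyMeasurable hw.aestronglyMeasurable) ?_
  filter_upwards with ω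
  have h3 := abs_real_inner_le_norm (u ω) (w ω)
  simp only [Pi.add_apply]
  rw [Real.norm_eq_abs]
  nlinarith [norm_nonneg (u ω), norm_nonneg (w ω), sq_nonneg (‖u ω‖ - ‖w ω‖)]

lemma aux_cauchy_schwarz {u w : Ω → ℝ} (hu : MemLp u 2 P) (hw : MemLp w 2 P) :
    ∫ ω, u ω * w ω ∂P ≤ Real.sqrt (∫ ω, u ω ^ 2 ∂P) * Real.sqrt (∫ ω, w ω ^ 2 ∂P) := by
  set U := hu.toLp u with hUdef
  set W := hw.toLp w with hWdef
  have hUW : ⟪U, W⟫ = ∫ ω, u ω * w ω ∂P := by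
    rw [MeasureTheory.L2.inner_def]
    refine integral_congr_ae ?_
    filter_upwards [hu.coeFn_toLp, hw.coeFn_toLp] with ω h1 h2
    simp [hUdef, hWdef, h1, h2, RCLike.inner_apply, conj_trivial]
    ring
  have hU : ‖U‖ = Real.sqrt (∫ ω, u ω ^ 2 ∂P) := by
    have h : ⟪U, U⟫ = ∫ ω, u ω ^ 2 ∂P := by
      rw [MeasureTheory.L2.inner_def]
      refine integral_congr_ae ?_
      filter_upwards [hu.coeFn_toLp] with ω h1
      simp [hUdef, h1, RCLike.inner_apply, conj_trivial, sq]
    rw [← h, real_inner_self_eq_norm_sq, Real.sqrt_sq (norm_nonneg _)]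
  have hW : ‖W‖ = Real.sqrt (∫ ω, w ω ^ 2 ∂P) := by
    have h : ⟪W, W⟫ = ∫ ω, w ω ^ 2 ∂P := by
      rw [MeasureTheory.L2.inner_def]
      refine integral_congr_ae ?_
      filter_upwards [hw.coeFn_toLp] with ω h1
      simp [hWdef, h1, RCLike.inner_apply, conj_trivial, sq]
    rw [← h, real_inner_self_eq_norm_sq, Real.sqrt_sq (norm_nonneg _)]
  rw [← hUW, ← hU, ← hW]
  exact real_inner_le_norm U W

lemma aux_proj {Q : Set E} (hQ : Convex ℝ Q) {y p z : E} (hp : p ∈ Q) (hz : z ∈ Q)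
    (hmin : ∀ w ∈ Q, ‖y - p‖ ≤ ‖y - w‖) : ‖p - z‖ ≤ ‖y - z‖ := by
  have hbdd : BddBelow (Set.range fun w : Q => ‖y - w‖) := by
    refine ⟨0, ?_⟩; rintro b ⟨w, rfl⟩; exact norm_nonneg _
  haveI : Nonempty Q := ⟨⟨p, hp⟩⟩
  have hinf : ‖y - p‖ = ⨅ w : Q, ‖y - w‖ :=
    le_antisymm (le_ciInf fun w => hmin w w.2) (ciInf_le hbdd (⟨p, hp⟩ : Q))
  have hvar : ⟪y - p, z - p⟫ ≤ 0 :=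
    (norm_eq_iInf_iff_real_inner_le_zero hQ hp).mp hinf z hz
  have hsq : ‖z - p‖ ^ 2 ≤ ‖y - z‖ ^ 2 := by
    have h : y - z = (y - p) - (z - p) := by abel
    have hexp : ‖y - z‖ ^ 2 = ‖y - p‖ ^ 2 - 2 * ⟪y - p, z - p⟫ + ‖z - p‖ ^ 2 := by
      rw [h, norm_sub_sq_real]
    nlinarith [sq_nonneg ‖y - p‖]
  calc ‖p - z‖ = ‖z - p‖ := norm_sub_rev _ _
    _ = Real.sqrt (‖z - p‖ ^ 2) := (Real.sqrt_sq (norm_nonneg _)).symm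
    _ ≤ Real.sqrt (‖y - z‖ ^ 2) := Real.sqrt_le_sqrt hsq
    _ = ‖y - z‖ := Real.sqrt_sq (norm_nonneg _)

lemma aux_grad_convex {F : Type*} [NormedAddCommGroup F] [InnerProductSpace ℝ F]
    [CompleteSpace F] {f : F → ℝ} (hdiff : Differentiable ℝ f)
    (hconv : ConvexOn ℝ Set.univ f) (a b : F) :
    f a - f b ≤ ⟪gradient f a, a - b⟫ := by
  have hline : HasDerivAt (fun t : ℝ => a + t • (b - a)) (b - a) 0 := by
    have h1 : HasDerivAt (fun t : ℝ => t • (b - a)) ((1 : ℝ) • (b - a)) 0 :=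
      (hasDerivAt_id (0 : ℝ)).smul_const (b - a)
    simpa using h1.const_add a
  have hgrad : HasFDerivAt f (InnerProductSpace.toDual ℝ F (gradient f a)) a := by
    have h := (hdiff a).hasGradientAt
    rwa [hasGradientAt_iff_hasFDerivAt] at h
  have hgrad' : HasFDerivAt f (InnerProductSpace.toDual ℝ F (gradient f a))
      (a + (0 : ℝ) • (b - a)) := by simpa using hgrad
  have hcomp : HasDerivAt (fun t : ℝ => f (a + t • (b - a)))
      ⟪gradient f a, b - a⟫ 0 := by
    have h := hgrad'.comp_hasDerivAt (0 : ℝ) hline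
    simpa [InnerProductSpace.toDual_apply_apply, Function.comp_def] using h
  have hφconv : ConvexOn ℝ Set.univ (fun t : ℝ => f (a + t • (b - a))) := by
    have h := hconv.comp_affineMap (AffineMap.lineMap a b)
    rw [Set.preimage_univ] at h
    have heq : (f ∘ ⇑(AffineMap.lineMap a b)) = fun t : ℝ => f (a + t • (b - a)) := by
      funext t
      simp only [Function.comp_apply, AffineMap.lineMap_apply_module']
      congr 1
      abel
    rwa [heq] at h
  have hslope := hφconv.le_slope_of_hasDerivAt (Set.mem_univ (0 : ℝ)) (Set.mem_univ 1)
    zero_lt_one hcomp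
  rw [slope_def_field] at hslope
  have h0 : a + (0 : ℝ) • (b - a) = a := by simp
  have h1 : a + (1 : ℝ) • (b - a) = b := by rw [one_smul]; abel
  rw [h0, h1] at hslope
  have hneg : ⟪gradient f a, a - b⟫ = -⟪gradient f a, b - a⟫ := by
    rw [← inner_neg_right]
    congr 1
    abel
  rw [hneg]
  have : (f b - f a) / (1 - 0 : ℝ) = f b - f a := by norm_num
  linarith [hslope.trans_eq this]

end helpers
section pull

lemma aux_pullout {Ω : Type*} {m : MeasurableSpace Ω} {m0 : MeasurableSpace Ω}
    {P : Measure Ω} [IsProbabilityMeasure P] (hm : m ≤ m0) {d : ℕ}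
    {v g h : Ω → EuclideanSpace ℝ (Fin d)}
    (hv : StronglyMeasurable[m] v) (hv2 : MemLp v 2 P) (hg2 : MemLp g 2 P)
    (hh : StronglyMeasurable[m] h) (hhint : Integrable h P)
    (hmean : P[g|m] =ᵐ[P] h) :
    Integrable (fun ω => ⟪v ω, h ω⟫) P ∧
      ∫ ω, ⟪v ω, g ω⟫ ∂P = ∫ ω, ⟪v ω, h ω⟫ ∂P := by
  have hgint : Integrable g P := hg2.integrable one_le_two
  -- coordinates
  have hvi : ∀ i : Fin d, StronglyMeasurable[m] (fun ω => v ω i) := fun i =>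
    (EuclideanSpace.proj (𝕜 := ℝ) i).continuous.comp_stronglyMeasurable hv
  have hvi2 : ∀ i : Fin d, MemLp (fun ω => v ω i) 2 P := fun i =>
    (EuclideanSpace.proj (𝕜 := ℝ) i).comp_memLp' hv2
  have hgi2 : ∀ i : Fin d, MemLp (fun ω => g ω i) 2 P := fun i =>
    (EuclideanSpace.proj (𝕜 := ℝ) i).comp_memLp' hg2
  have hgiint : ∀ i : Fin d, Integrable (fun ω => g ω i) P := fun i =>
    (EuclideanSpace.proj (𝕜 := ℝ) i).integrable_comp hgint
  have hmul : ∀ i : Fin d, Integrable (fun ω => v ω i * g ω i) P := fun i =>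
    aux_integrable_mul (hvi2 i) (hgi2 i)
  -- coordinate condexp identification
  have hcoord : ∀ i : Fin d, (fun ω => h ω i) =ᵐ[P] P[fun ω => g ω i|m] := by
    intro i
    refine ae_eq_condExp_of_forall_setIntegral_eq hm (hgiint i)
      (fun s _ _ => ((EuclideanSpace.proj (𝕜 := ℝ) i).integrable_comp hhint).integrableOn)
      (fun s hs _ => ?_)
      (((EuclideanSpace.proj (𝕜 := ℝ) i).continuous.comp_stronglyMeasurable
        hh).aestronglyMeasurable)
    have h1 : ∫ ω in s, h ω ∂P = ∫ ω in s, g ω ∂P := by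
      rw [← setIntegral_condExp hm hgint hs]
      exact integral_congr_ae (ae_restrict_of_ae hmean.symm)
    have h2 : ∫ ω in s, h ω i ∂P
        = EuclideanSpace.proj (𝕜 := ℝ) i (∫ ω in s, h ω ∂P) :=
      ((EuclideanSpace.proj (𝕜 := ℝ) i).integral_comp_comm hhint.integrableOn)
    have h3 : ∫ ω in s, g ω i ∂P
        = EuclideanSpace.proj (𝕜 := ℝ) i (∫ ω in s, g ω ∂P) :=
      ((EuclideanSpace.proj (𝕜 := ℝ) i).integral_comp_comm hgint.integrableOn)
    rw [h2, h3, h1]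
  -- pull-out per coordinate
  have hkey : ∀ i : Fin d, (∫ ω, v ω i * g ω i ∂P = ∫ ω, v ω i * h ω i ∂P)
      ∧ Integrable (fun ω => v ω i * h ω i) P := by
    intro i
    have hpull := condExp_mul_of_stronglyMeasurable_left (μ := P) (hvi i) (hmul i) (hgiint i)
    have hae : P[(fun ω => v ω i) * (fun ω => g ω i)|m]
        =ᵐ[P] fun ω => v ω i * h ω i := by
      filter_upwards [hpull, hcoord i] with ω h1 h2
      simp only [Pi.mul_apply] at h1 ⊢
      rw [h1, ← h2]
    constructor
    · rw [← integral_condExp (μ := P) hm (f := fun ω => v ω i * g ω i)]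
      exact integral_congr_ae hae
    · exact (integrable_condExp (f := (fun ω => v ω i) * (fun ω => g ω i))).congr hae
  have hinnersum : ∀ (w : Ω → EuclideanSpace ℝ (Fin d)) (ω : Ω),
      ⟪v ω, w ω⟫ = ∑ i : Fin d, v ω i * w ω i := by
    intro w ω
    rw [PiLp.inner_apply]
    simp [RCLike.inner_apply, conj_trivial]
    exact Finset.sum_congr rfl fun i _ => mul_comm _ _
  constructor
  · have : Integrable (fun ω => ∑ i : Fin d, v ω i * h ω i) P :=
      integrable_finset_sum _ fun i _ => (hkey i).2
    exact this.congr (Filter.Eventually.of_forall fun ω => (hinnersum h ω).symm)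
  · calc ∫ ω, ⟪v ω, g ω⟫ ∂P = ∑ i : Fin d, ∫ ω, v ω i * g ω i ∂P := by
          simp_rw [hinnersum g]
          exact integral_finset_sum _ fun i _ => hmul i
      _ = ∑ i : Fin d, ∫ ω, v ω i * h ω i ∂P := by
          exact Finset.sum_congr rfl fun i _ => (hkey i).1
      _ = ∫ ω, ⟪v ω, h ω⟫ ∂P := by
          rw [← integral_finset_sum _ fun i _ => (hkey i).2]
          simp_rw [hinnersum h]
set_option maxHeartbeats 1600000 in
/-- Convex convergence guarantee for BTARD-Clipped-SGD: projected SGD on a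
nonempty closed convex set `Q` with inexact aggregated gradient estimates satisfying
`E[‖ĝ^k − ḡ^k‖²|F_k] ≤ δ̂_k·A` and `E[‖ĝ^k‖²|F_k] ≤ 2δ̂_k·A + 2B`; under the three
stepsize conditions the averaged iterate satisfies `E[f(x̄^K) − f(x*)] ≤ R₀²/(γK)`.
Here `proj` is the Euclidean metric projection onto `Q`, characterized by
`proj y ∈ Q` and `‖y − proj y‖ ≤ ‖y − z‖ for all z ∈ Q`. -/
theorem btard_clipped_sgd_convex_convergence
    {Ω : Type*} {m0 : MeasurableSpace Ω} (P : Measure Ω) [IsProbabilityMeasure P]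
    (ℱ : Filtration ℕ m0) {d : ℕ}
    (Q : Set (EuclideanSpace ℝ (Fin d))) (hQne : Q.Nonempty) (hQclosed : IsClosed Q)
    (hQconvex : Convex ℝ Q)
    (proj : EuclideanSpace ℝ (Fin d) → EuclideanSpace ℝ (Fin d))
    (hproj : ∀ y, proj y ∈ Q ∧ ∀ z ∈ Q, ‖y - proj y‖ ≤ ‖y - z‖)
    (f : EuclideanSpace ℝ (Fin d) → ℝ)
    (hdiff : Differentiable ℝ f) (hconv : ConvexOn ℝ Set.univ f)
    (xstar : EuclideanSpace ℝ (Fin d)) (hxstarQ : xstar ∈ Q)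
    (hmin : ∀ z ∈ Q, f xstar ≤ f z)
    (K : ℕ) (hK : 0 < K)
    (γ A B R₀ : ℝ) (hγ : 0 < γ) (hA : 0 ≤ A) (hB : 0 ≤ B)
    (x0 : EuclideanSpace ℝ (Fin d)) (hx0Q : x0 ∈ Q) (hR₀ : ‖x0 - xstar‖ ≤ R₀)
    (x ghat gbar : ℕ → Ω → EuclideanSpace ℝ (Fin d)) (δhat : ℕ → Ω → ℝ)
    (hx0 : x 0 = fun _ => x0)
    (hxmeas : ∀ k < K, StronglyMeasurable[ℱ k] (x k))
    (hδmeas : ∀ k < K, StronglyMeasurable[ℱ k] (δhat k))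
    (hδnonneg : ∀ k < K, ∀ ω, 0 ≤ δhat k ω)
    (hδint : ∀ k < K, Integrable (δhat k) P)
    (hgbarint : ∀ k < K, Integrable (gbar k) P)
    (hghatint : ∀ k < K, Integrable (ghat k) P)
    (hdevint : ∀ k < K, Integrable (fun ω => ‖ghat k ω - gbar k ω‖ ^ 2) P)
    (hsecint : ∀ k < K, Integrable (fun ω => ‖ghat k ω‖ ^ 2) P)
    (hfint : ∀ k < K, Integrable (fun ω => f (x k ω)) P)
    (hmean : ∀ k < K, P[gbar k|ℱ k] =ᵐ[P] fun ω => gradient f (x k ω))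
    (hdev : ∀ k < K, ∀ᵐ ω ∂P,
      (P[fun ω' => ‖ghat k ω' - gbar k ω'‖ ^ 2|ℱ k]) ω ≤ δhat k ω * A)
    (hsec : ∀ k < K, ∀ᵐ ω ∂P,
      (P[fun ω' => ‖ghat k ω'‖ ^ 2|ℱ k]) ω ≤ 2 * δhat k ω * A + 2 * B)
    (hupd : ∀ k < K, ∀ ω, x (k + 1) ω = proj (x k ω - γ • ghat k ω))
    (hcond1 : 2 * γ ^ 2 * B * K ≤ R₀ ^ 2 / 3)
    (hcond2 : 2 * Real.sqrt 2 * γ * Real.sqrt A * R₀ *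
        ∑ k ∈ Finset.range K, Real.sqrt (∫ ω, δhat k ω ∂P) ≤ R₀ ^ 2 / 3)
    (hcond3 : 2 * γ ^ 2 * A *
        ∑ k ∈ Finset.range K, (∫ ω, δhat k ω ∂P) ≤ R₀ ^ 2 / 3) :
    (∫ ω, f ((K : ℝ)⁻¹ • ∑ k ∈ Finset.range K, x k ω) ∂P) - f xstar
      ≤ R₀ ^ 2 / (γ * K) := by
  classical
  have hR0 : 0 ≤ R₀ := le_trans (norm_nonneg _) hR₀
  -- iterates stay in Q
  have hxQ : ∀ k, k ≤ K → ∀ ω, x k ω ∈ Q := by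
    intro k
    induction k with
    | zero => intro _ ω; rw [hx0]; exact hx0Q
    | succ n _ =>
      intro hn ω
      rw [hupd n (Nat.lt_of_succ_le hn)]
      exact (hproj _).1
  -- L² memberships
  have memG : ∀ k, k < K → MemLp (ghat k) 2 P := fun k hk =>
    (memLp_two_iff_integrable_sq_norm (hghatint k hk).aestronglyMeasurable).mpr (hsecint k hk)
  have memD : ∀ k, k < K → MemLp (fun ω => ghat k ω - gbar k ω) 2 P := fun k hk =>
    (memLp_two_iff_integrable_sq_norm ((hghatint k hk).aestronglyMeasurable.sub
      (hgbarint k hk).aestronglyMeasurable)).mpr (hdevint k hk)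
  have memB : ∀ k, k < K → MemLp (gbar k) 2 P := by
    intro k hk
    have h := (memG k hk).sub (memD k hk)
    have heq : gbar k = ghat k - fun ω => ghat k ω - gbar k ω := by
      funext ω; simp only [Pi.sub_apply]; abel
    rwa [← heq] at h
  have memX : ∀ k, k < K → MemLp (fun ω => x k ω - xstar) 2 P := by
    intro k
    induction k with
    | zero =>
      intro _
      have h : (fun ω : Ω => x 0 ω - xstar) = fun _ => x0 - xstar := by
        funext ω; rw [hx0]
      rw [h]; exact memLp_const _
    | succ n ih =>
      intro hn
      have hnK : n < K := Nat.lt_of_succ_lt hn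
      have hbound : MemLp (fun ω => ‖x n ω - xstar‖ + γ * ‖ghat n ω‖) 2 P :=
        (ih hnK).norm.add ((memG n hnK).norm.const_mul γ)
      refine hbound.of_le
        (((hxmeas (n+1) hn).mono (ℱ.le _)).aestronglyMeasurable.sub
          aestronglyMeasurable_const) ?_
      filter_upwards with ω
      have hb : ‖x (n+1) ω - xstar‖ ≤ ‖x n ω - xstar‖ + γ * ‖ghat n ω‖ := by
        rw [hupd n hnK]
        refine le_trans (aux_proj hQconvex (hproj _).1 hxstarQ (hproj _).2) ?_
        have h1 : x n ω - γ • ghat n ω - xstar = (x n ω - xstar) - γ • ghat n ω := by abel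
        rw [h1]
        refine le_trans (norm_sub_le _ _) ?_
        rw [norm_smul, Real.norm_eq_abs, abs_of_pos hγ]
      rw [Real.norm_eq_abs (‖x n ω - xstar‖ + γ * ‖ghat n ω‖)]
      exact hb.trans (le_abs_self _)
  have hεnn : ∀ k, k < K → 0 ≤ ∫ ω, δhat k ω ∂P := fun k hk =>
    integral_nonneg (hδnonneg k hk)
  have hrnn : ∀ k, 0 ≤ ∫ ω, ‖x k ω - xstar‖ ^ 2 ∂P := fun k =>
    integral_nonneg fun ω => sq_nonneg _
  have hFge : ∀ k, k < K → f xstar ≤ ∫ ω, f (x k ω) ∂P := by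
    intro k hk
    have h1 : ∫ (_ : Ω), f xstar ∂P ≤ ∫ ω, f (x k ω) ∂P :=
      integral_mono (integrable_const _) (hfint k hk) fun ω => hmin _ (hxQ k hk.le ω)
    simpa using h1
  -- one-step inequality
  have step : ∀ k, k < K →
      (∫ ω, ‖x (k+1) ω - xstar‖ ^ 2 ∂P) + 2 * γ * ((∫ ω, f (x k ω) ∂P) - f xstar) ≤
        (∫ ω, ‖x k ω - xstar‖ ^ 2 ∂P)
          + 2 * γ * (Real.sqrt A * Real.sqrt (∫ ω, δhat k ω ∂P)
              * Real.sqrt (∫ ω, ‖x k ω - xstar‖ ^ 2 ∂P))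
          + γ ^ 2 * (2 * A * (∫ ω, δhat k ω ∂P) + 2 * B) := by
    intro k hk
    have memV := memX k hk
    have hVmeas : StronglyMeasurable[ℱ k] (fun ω => x k ω - xstar) :=
      (hxmeas k hk).sub stronglyMeasurable_const
    have hVsq : Integrable (fun ω => ‖x k ω - xstar‖ ^ 2) P :=
      (memLp_two_iff_integrable_sq_norm memV.aestronglyMeasurable).mp memV
    have intInner : Integrable (fun ω => ⟪x k ω - xstar, ghat k ω⟫) P :=
      aux_integrable_inner memV (memG k hk)
    have intInnerB : Integrable (fun ω => ⟪x k ω - xstar, gbar k ω⟫) P :=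
      aux_integrable_inner memV (memB k hk)
    have intInnerD : Integrable (fun ω => ⟪x k ω - xstar, ghat k ω - gbar k ω⟫) P :=
      aux_integrable_inner memV (memD k hk)
    have ptw : ∀ ω, ‖x (k+1) ω - xstar‖ ^ 2 ≤
        ‖x k ω - xstar‖ ^ 2 - 2 * γ * ⟪x k ω - xstar, ghat k ω⟫
          + γ ^ 2 * ‖ghat k ω‖ ^ 2 := by
      intro ω
      have h1 : ‖x (k+1) ω - xstar‖ ≤ ‖x k ω - γ • ghat k ω - xstar‖ := by
        rw [hupd k hk]
        exact aux_proj hQconvex (hproj _).1 hxstarQ (hproj _).2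
      have h2 : ‖x k ω - γ • ghat k ω - xstar‖ ^ 2 =
          ‖x k ω - xstar‖ ^ 2 - 2 * γ * ⟪x k ω - xstar, ghat k ω⟫
            + γ ^ 2 * ‖ghat k ω‖ ^ 2 := by
        have h3 : x k ω - γ • ghat k ω - xstar = (x k ω - xstar) - γ • ghat k ω := by abel
        rw [h3, norm_sub_sq_real, real_inner_smul_right, norm_smul, Real.norm_eq_abs,
          mul_pow, sq_abs]
        ring
      calc ‖x (k+1) ω - xstar‖ ^ 2 ≤ ‖x k ω - γ • ghat k ω - xstar‖ ^ 2 :=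
            pow_le_pow_left₀ (norm_nonneg _) h1 2
        _ = _ := h2
    have iInner2 : Integrable (fun ω => 2 * γ * ⟪x k ω - xstar, ghat k ω⟫) P :=
      intInner.const_mul _
    have iSec2 : Integrable (fun ω => γ ^ 2 * ‖ghat k ω‖ ^ 2) P :=
      (hsecint k hk).const_mul _
    have iSub : Integrable (fun ω => ‖x k ω - xstar‖ ^ 2
        - 2 * γ * ⟪x k ω - xstar, ghat k ω⟫) P := hVsq.sub iInner2
    have intRHS : Integrable (fun ω => ‖x k ω - xstar‖ ^ 2
        - 2 * γ * ⟪x k ω - xstar, ghat k ω⟫ + γ ^ 2 * ‖ghat k ω‖ ^ 2) P :=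
      iSub.add iSec2
    have hr1 : (∫ ω, ‖x (k+1) ω - xstar‖ ^ 2 ∂P) ≤ ∫ ω, (‖x k ω - xstar‖ ^ 2
        - 2 * γ * ⟪x k ω - xstar, ghat k ω⟫ + γ ^ 2 * ‖ghat k ω‖ ^ 2) ∂P :=
      integral_mono_of_nonneg (Filter.Eventually.of_forall fun ω => sq_nonneg _)
        intRHS (Filter.Eventually.of_forall ptw)
    have hsplitRHS : ∫ ω, (‖x k ω - xstar‖ ^ 2
        - 2 * γ * ⟪x k ω - xstar, ghat k ω⟫ + γ ^ 2 * ‖ghat k ω‖ ^ 2) ∂P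
        = (∫ ω, ‖x k ω - xstar‖ ^ 2 ∂P)
          - 2 * γ * (∫ ω, ⟪x k ω - xstar, ghat k ω⟫ ∂P)
          + γ ^ 2 * (∫ ω, ‖ghat k ω‖ ^ 2 ∂P) := by
      rw [integral_add iSub iSec2, integral_sub hVsq iInner2, integral_const_mul,
        integral_const_mul]
    have hinnersplit : ∫ ω, ⟪x k ω - xstar, ghat k ω⟫ ∂P
        = (∫ ω, ⟪x k ω - xstar, gbar k ω⟫ ∂P)
          + ∫ ω, ⟪x k ω - xstar, ghat k ω - gbar k ω⟫ ∂P := by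
      rw [← integral_add intInnerB intInnerD]
      refine integral_congr_ae (Filter.Eventually.of_forall fun ω => ?_)
      simp only [inner_sub_right]
      ring
    have hgradmeas : StronglyMeasurable[ℱ k] (fun ω => gradient f (x k ω)) := by
      have hgm : Measurable (gradient f) := by
        have h : gradient f = fun y =>
            (InnerProductSpace.toDual ℝ (EuclideanSpace ℝ (Fin d))).symm (fderiv ℝ f y) := rfl
        rw [h]
        exact ((InnerProductSpace.toDual ℝ _).symm.continuous.measurable).comp
          (measurable_fderiv ℝ f)
      exact (hgm.comp (hxmeas k hk).measurable).stronglyMeasurable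
    have hgradint : Integrable (fun ω => gradient f (x k ω)) P :=
      integrable_condExp.congr (hmean k hk)
    obtain ⟨hIntGrad, hPull⟩ := aux_pullout (ℱ.le k) hVmeas memV (memB k hk)
      hgradmeas hgradint (hmean k hk)
    have hlow : (∫ ω, f (x k ω) ∂P) - f xstar
        ≤ ∫ ω, ⟪x k ω - xstar, gradient f (x k ω)⟫ ∂P := by
      have h1 : ∀ ω, f (x k ω) - f xstar ≤ ⟪x k ω - xstar, gradient f (x k ω)⟫ := by
        intro ω
        have h2 := aux_grad_convex hdiff hconv (x k ω) xstar
        rwa [real_inner_comm] at h2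
      have iFsub : Integrable (fun ω => f (x k ω) - f xstar) P :=
        (hfint k hk).sub (integrable_const _)
      have h3 := integral_mono iFsub hIntGrad h1
      rwa [integral_sub (hfint k hk) (integrable_const _), integral_const,
        probReal_univ, one_smul] at h3
    have hdevsq : ∫ ω, ‖ghat k ω - gbar k ω‖ ^ 2 ∂P ≤ (∫ ω, δhat k ω ∂P) * A := by
      have h1 := integral_condExp (μ := P) (ℱ.le k)
        (f := fun ω' => ‖ghat k ω' - gbar k ω'‖ ^ 2)
      have h2 : ∫ ω, (P[fun ω' => ‖ghat k ω' - gbar k ω'‖ ^ 2|ℱ k]) ω ∂P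
          ≤ ∫ ω, δhat k ω * A ∂P :=
        integral_mono_ae integrable_condExp ((hδint k hk).mul_const A) (hdev k hk)
      rw [h1] at h2
      rwa [integral_mul_const] at h2
    have hsecb : ∫ ω, ‖ghat k ω‖ ^ 2 ∂P ≤ 2 * A * (∫ ω, δhat k ω ∂P) + 2 * B := by
      have h1 := integral_condExp (μ := P) (ℱ.le k) (f := fun ω' => ‖ghat k ω'‖ ^ 2)
      have h2 : ∫ ω, (P[fun ω' => ‖ghat k ω'‖ ^ 2|ℱ k]) ω ∂P
          ≤ ∫ ω, (2 * δhat k ω * A + 2 * B) ∂P :=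
        integral_mono_ae integrable_condExp
          ((((hδint k hk).const_mul 2).mul_const A).add (integrable_const _)) (hsec k hk)
      rw [h1] at h2
      have h3 : ∫ ω, (2 * δhat k ω * A + 2 * B) ∂P
          = 2 * A * (∫ ω, δhat k ω ∂P) + 2 * B := by
        rw [integral_add (((hδint k hk).const_mul 2).mul_const A) (integrable_const _),
          integral_const, probReal_univ, one_smul]
        congr 1
        rw [show (fun ω => 2 * δhat k ω * A) = fun ω => (2 * A) * δhat k ω by
          funext ω; ring]
        rw [integral_const_mul]
      rwa [h3] at h2
    have hCS : ∫ ω, ‖x k ω - xstar‖ * ‖ghat k ω - gbar k ω‖ ∂P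
        ≤ Real.sqrt (∫ ω, ‖x k ω - xstar‖ ^ 2 ∂P)
          * Real.sqrt (∫ ω, ‖ghat k ω - gbar k ω‖ ^ 2 ∂P) :=
      aux_cauchy_schwarz memV.norm (memD k hk).norm
    have hs1 : Real.sqrt (∫ ω, ‖ghat k ω - gbar k ω‖ ^ 2 ∂P)
        ≤ Real.sqrt A * Real.sqrt (∫ ω, δhat k ω ∂P) := by
      calc Real.sqrt (∫ ω, ‖ghat k ω - gbar k ω‖ ^ 2 ∂P)
          ≤ Real.sqrt ((∫ ω, δhat k ω ∂P) * A) := Real.sqrt_le_sqrt hdevsq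
        _ = Real.sqrt (∫ ω, δhat k ω ∂P) * Real.sqrt A := Real.sqrt_mul (hεnn k hk) A
        _ = Real.sqrt A * Real.sqrt (∫ ω, δhat k ω ∂P) := mul_comm _ _
    have hdevlow : -(Real.sqrt A * Real.sqrt (∫ ω, δhat k ω ∂P)
          * Real.sqrt (∫ ω, ‖x k ω - xstar‖ ^ 2 ∂P))
        ≤ ∫ ω, ⟪x k ω - xstar, ghat k ω - gbar k ω⟫ ∂P := by
      have h1 : ∀ ω, -(‖x k ω - xstar‖ * ‖ghat k ω - gbar k ω‖)
          ≤ ⟪x k ω - xstar, ghat k ω - gbar k ω⟫ := fun ω =>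
        (abs_le.mp (abs_real_inner_le_norm _ _)).1
      have ineg : Integrable
          (fun ω => -(‖x k ω - xstar‖ * ‖ghat k ω - gbar k ω‖)) P :=
        (aux_integrable_mul memV.norm (memD k hk).norm).neg
      have h2 := integral_mono ineg intInnerD h1
      rw [integral_neg] at h2
      have h3 : Real.sqrt (∫ ω, ‖x k ω - xstar‖ ^ 2 ∂P)
            * Real.sqrt (∫ ω, ‖ghat k ω - gbar k ω‖ ^ 2 ∂P)
          ≤ Real.sqrt (∫ ω, ‖x k ω - xstar‖ ^ 2 ∂P)
            * (Real.sqrt A * Real.sqrt (∫ ω, δhat k ω ∂P)) :=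
        mul_le_mul_of_nonneg_left hs1 (Real.sqrt_nonneg _)
      have h4 : Real.sqrt (∫ ω, ‖x k ω - xstar‖ ^ 2 ∂P)
            * (Real.sqrt A * Real.sqrt (∫ ω, δhat k ω ∂P))
          = Real.sqrt A * Real.sqrt (∫ ω, δhat k ω ∂P)
            * Real.sqrt (∫ ω, ‖x k ω - xstar‖ ^ 2 ∂P) := by ring
      linarith [hCS]
    -- combine
    have hI : ((∫ ω, f (x k ω) ∂P) - f xstar)
        - Real.sqrt A * Real.sqrt (∫ ω, δhat k ω ∂P)
          * Real.sqrt (∫ ω, ‖x k ω - xstar‖ ^ 2 ∂P)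
        ≤ ∫ ω, ⟪x k ω - xstar, ghat k ω⟫ ∂P := by
      rw [hinnersplit, hPull]
      linarith
    have hmul1 : 2 * γ * (((∫ ω, f (x k ω) ∂P) - f xstar)
          - Real.sqrt A * Real.sqrt (∫ ω, δhat k ω ∂P)
            * Real.sqrt (∫ ω, ‖x k ω - xstar‖ ^ 2 ∂P))
        ≤ 2 * γ * (∫ ω, ⟪x k ω - xstar, ghat k ω⟫ ∂P) :=
      mul_le_mul_of_nonneg_left hI (by linarith)
    have hmul2 : γ ^ 2 * (∫ ω, ‖ghat k ω‖ ^ 2 ∂P)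
        ≤ γ ^ 2 * (2 * A * (∫ ω, δhat k ω ∂P) + 2 * B) :=
      mul_le_mul_of_nonneg_left hsecb (sq_nonneg γ)
    rw [hsplitRHS] at hr1
    nlinarith [hr1, hmul1, hmul2]
  -- nonnegativity of the per-step cost
  have hcnn : ∀ j, j < K → 0 ≤ 2 * Real.sqrt 2 * γ * Real.sqrt A * R₀
      * Real.sqrt (∫ ω, δhat j ω ∂P)
      + 2 * γ ^ 2 * A * (∫ ω, δhat j ω ∂P) + 2 * γ ^ 2 * B := by
    intro j hj
    have h1 : (0:ℝ) ≤ 2 * Real.sqrt 2 * γ * Real.sqrt A * R₀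
        * Real.sqrt (∫ ω, δhat j ω ∂P) :=
      mul_nonneg (mul_nonneg (mul_nonneg (mul_nonneg (by positivity) hγ.le)
        (Real.sqrt_nonneg _)) hR0) (Real.sqrt_nonneg _)
    have h2 : (0:ℝ) ≤ 2 * γ ^ 2 * A * (∫ ω, δhat j ω ∂P) :=
      mul_nonneg (mul_nonneg (by positivity) hA) (hεnn j hj)
    have h3 : (0:ℝ) ≤ 2 * γ ^ 2 * B := mul_nonneg (by positivity) hB
    linarith
  have hcsum : ∑ j ∈ Finset.range K, (2 * Real.sqrt 2 * γ * Real.sqrt A * R₀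
      * Real.sqrt (∫ ω, δhat j ω ∂P)
      + 2 * γ ^ 2 * A * (∫ ω, δhat j ω ∂P) + 2 * γ ^ 2 * B) ≤ R₀ ^ 2 := by
    rw [Finset.sum_add_distrib, Finset.sum_add_distrib, Finset.sum_const,
      Finset.card_range, nsmul_eq_mul]
    rw [show ∑ j ∈ Finset.range K, 2 * Real.sqrt 2 * γ * Real.sqrt A * R₀
        * Real.sqrt (∫ ω, δhat j ω ∂P)
        = 2 * Real.sqrt 2 * γ * Real.sqrt A * R₀
          * ∑ j ∈ Finset.range K, Real.sqrt (∫ ω, δhat j ω ∂P) from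
      (Finset.mul_sum _ _ _).symm]
    rw [show ∑ j ∈ Finset.range K, 2 * γ ^ 2 * A * (∫ ω, δhat j ω ∂P)
        = 2 * γ ^ 2 * A * ∑ j ∈ Finset.range K, (∫ ω, δhat j ω ∂P) from
      (Finset.mul_sum _ _ _).symm]
    have hc1 : (K:ℝ) * (2 * γ ^ 2 * B) = 2 * γ ^ 2 * B * K := by ring
    linarith [hcond1, hcond2, hcond3]
  -- main induction
  have hsum : ∀ k, k ≤ K →
      (∫ ω, ‖x k ω - xstar‖ ^ 2 ∂P)
        + 2 * γ * (∑ j ∈ Finset.range k, ((∫ ω, f (x j ω) ∂P) - f xstar))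
      ≤ R₀ ^ 2 + ∑ j ∈ Finset.range k, (2 * Real.sqrt 2 * γ * Real.sqrt A * R₀
          * Real.sqrt (∫ ω, δhat j ω ∂P)
          + 2 * γ ^ 2 * A * (∫ ω, δhat j ω ∂P) + 2 * γ ^ 2 * B) := by
    intro k
    induction k with
    | zero =>
      intro _
      simp only [Finset.range_zero, Finset.sum_empty, mul_zero, add_zero]
      have h : (fun ω : Ω => ‖x 0 ω - xstar‖ ^ 2) = fun _ => ‖x0 - xstar‖ ^ 2 := by
        funext ω; rw [hx0]
      rw [h, integral_const, probReal_univ, one_smul]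
      exact pow_le_pow_left₀ (norm_nonneg _) hR₀ 2
    | succ n ih =>
      intro hn
      have hnK : n < K := Nat.lt_of_succ_le hn
      have ihn := ih hnK.le
      have hsumc_le : ∑ j ∈ Finset.range n, (2 * Real.sqrt 2 * γ * Real.sqrt A * R₀
            * Real.sqrt (∫ ω, δhat j ω ∂P)
            + 2 * γ ^ 2 * A * (∫ ω, δhat j ω ∂P) + 2 * γ ^ 2 * B)
          ≤ ∑ j ∈ Finset.range K, (2 * Real.sqrt 2 * γ * Real.sqrt A * R₀
            * Real.sqrt (∫ ω, δhat j ω ∂P)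
            + 2 * γ ^ 2 * A * (∫ ω, δhat j ω ∂P) + 2 * γ ^ 2 * B) :=
        Finset.sum_le_sum_of_subset_of_nonneg
          (Finset.range_subset_range.mpr hnK.le)
          (fun j hj _ => hcnn j (Finset.mem_range.mp hj))
      have hsumF_nn : 0 ≤ ∑ j ∈ Finset.range n, ((∫ ω, f (x j ω) ∂P) - f xstar) :=
        Finset.sum_nonneg fun j hj => sub_nonneg.mpr
          (hFge j (lt_of_lt_of_le (Finset.mem_range.mp hj) hnK.le))
      have hgsF : 0 ≤ 2 * γ * ∑ j ∈ Finset.range n, ((∫ ω, f (x j ω) ∂P) - f xstar) :=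
        mul_nonneg (by linarith) hsumF_nn
      have hrn : (∫ ω, ‖x n ω - xstar‖ ^ 2 ∂P) ≤ 2 * R₀ ^ 2 := by
        linarith [ihn, hsumc_le, hcsum]
      have hsr : Real.sqrt (∫ ω, ‖x n ω - xstar‖ ^ 2 ∂P) ≤ Real.sqrt 2 * R₀ := by
        calc Real.sqrt (∫ ω, ‖x n ω - xstar‖ ^ 2 ∂P)
            ≤ Real.sqrt (2 * R₀ ^ 2) := Real.sqrt_le_sqrt hrn
          _ = Real.sqrt 2 * Real.sqrt (R₀ ^ 2) := Real.sqrt_mul (by norm_num) _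
          _ = Real.sqrt 2 * R₀ := by rw [Real.sqrt_sq hR0]
      have hstep := step n hnK
      have hmid : 2 * γ * (Real.sqrt A * Real.sqrt (∫ ω, δhat n ω ∂P)
            * Real.sqrt (∫ ω, ‖x n ω - xstar‖ ^ 2 ∂P))
          ≤ 2 * Real.sqrt 2 * γ * Real.sqrt A * R₀
            * Real.sqrt (∫ ω, δhat n ω ∂P) := by
        have h1 : Real.sqrt A * Real.sqrt (∫ ω, δhat n ω ∂P)
              * Real.sqrt (∫ ω, ‖x n ω - xstar‖ ^ 2 ∂P)
            ≤ Real.sqrt A * Real.sqrt (∫ ω, δhat n ω ∂P) * (Real.sqrt 2 * R₀) :=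
          mul_le_mul_of_nonneg_left hsr
            (mul_nonneg (Real.sqrt_nonneg _) (Real.sqrt_nonneg _))
        calc 2 * γ * (Real.sqrt A * Real.sqrt (∫ ω, δhat n ω ∂P)
              * Real.sqrt (∫ ω, ‖x n ω - xstar‖ ^ 2 ∂P))
            ≤ 2 * γ * (Real.sqrt A * Real.sqrt (∫ ω, δhat n ω ∂P)
              * (Real.sqrt 2 * R₀)) := mul_le_mul_of_nonneg_left h1 (by linarith)
          _ = 2 * Real.sqrt 2 * γ * Real.sqrt A * R₀
              * Real.sqrt (∫ ω, δhat n ω ∂P) := by ring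
      rw [Finset.sum_range_succ, Finset.sum_range_succ]
      linarith [hstep, ihn, hmid]
  -- conclusion of the sum bound
  have hSF : ∑ j ∈ Finset.range K, ((∫ ω, f (x j ω) ∂P) - f xstar) ≤ R₀ ^ 2 / γ := by
    have hfinal := hsum K le_rfl
    have h0 : 0 ≤ ∫ ω, ‖x K ω - xstar‖ ^ 2 ∂P := hrnn K
    have h2γ : 2 * γ * ∑ j ∈ Finset.range K, ((∫ ω, f (x j ω) ∂P) - f xstar)
        ≤ 2 * R₀ ^ 2 := by linarith [hcsum]
    rw [le_div_iff₀ hγ]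
    nlinarith
  -- Jensen step
  have hKpos : (0:ℝ) < K := Nat.cast_pos.mpr hK
  have hwsum : ∑ _k ∈ Finset.range K, (K:ℝ)⁻¹ = 1 := by
    rw [Finset.sum_const, Finset.card_range, nsmul_eq_mul]
    field_simp
  have hptJ : ∀ ω, f ((K:ℝ)⁻¹ • ∑ k ∈ Finset.range K, x k ω)
      ≤ ∑ k ∈ Finset.range K, (K:ℝ)⁻¹ * f (x k ω) := by
    intro ω
    have h1 : f (∑ k ∈ Finset.range K, (K:ℝ)⁻¹ • x k ω)
        ≤ ∑ k ∈ Finset.range K, (K:ℝ)⁻¹ * f (x k ω) := by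
      have := hconv.map_sum_le (fun i _ => by positivity) hwsum
        (fun i _ => Set.mem_univ (x i ω))
      simpa using this
    rw [Finset.smul_sum]
    exact h1
  have hmemQJ : ∀ ω, ((K:ℝ)⁻¹ • ∑ k ∈ Finset.range K, x k ω) ∈ Q := by
    intro ω
    rw [Finset.smul_sum]
    exact hQconvex.sum_mem (fun i _ => by positivity) hwsum
      (fun i hi => hxQ i (Finset.mem_range.mp hi).le ω)
  have hsm : StronglyMeasurable (fun ω => (K:ℝ)⁻¹ • ∑ k ∈ Finset.range K, x k ω) := by
    have h := (Finset.stronglyMeasurable_sum _ fun k hk =>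
      (hxmeas k (Finset.mem_range.mp hk)).mono (ℱ.le k)).const_smul ((K:ℝ)⁻¹)
    convert h using 1
    funext ω
    simp [Finset.sum_apply]
  have hintsum : Integrable (fun ω => ∑ k ∈ Finset.range K, (K:ℝ)⁻¹ * f (x k ω)) P :=
    integrable_finset_sum _ fun k hk => (hfint k (Finset.mem_range.mp hk)).const_mul _
  have hintJ : Integrable (fun ω => f ((K:ℝ)⁻¹ • ∑ k ∈ Finset.range K, x k ω)) P := by
    refine ((integrable_const |f xstar|).add hintsum.abs).mono'
      ((hdiff.continuous.comp_stronglyMeasurable hsm).aestronglyMeasurable) ?_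
    filter_upwards with ω
    simp only [Pi.add_apply]
    rw [Real.norm_eq_abs]
    have hge := hmin _ (hmemQJ ω)
    have hle := hptJ ω
    rw [abs_le]
    constructor
    · have := neg_abs_le (f xstar)
      have := abs_nonneg (∑ k ∈ Finset.range K, (K:ℝ)⁻¹ * f (x k ω))
      linarith
    · have := le_abs_self (∑ k ∈ Finset.range K, (K:ℝ)⁻¹ * f (x k ω))
      have := abs_nonneg (f xstar)
      linarith
  have hJ : ∫ ω, f ((K:ℝ)⁻¹ • ∑ k ∈ Finset.range K, x k ω) ∂P
      ≤ ∑ k ∈ Finset.range K, (K:ℝ)⁻¹ * (∫ ω, f (x k ω) ∂P) := by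
    have h1 := integral_mono hintJ hintsum hptJ
    rw [integral_finset_sum _
      (fun k hk => (hfint k (Finset.mem_range.mp hk)).const_mul _)] at h1
    simp_rw [integral_const_mul] at h1
    exact h1
  have hKne : (K:ℝ) ≠ 0 := ne_of_gt hKpos
  have h5 : ∑ k ∈ Finset.range K, (K:ℝ)⁻¹ * (∫ ω, f (x k ω) ∂P)
      = (K:ℝ)⁻¹ * ∑ j ∈ Finset.range K, ((∫ ω, f (x j ω) ∂P) - f xstar) + f xstar := by
    rw [← Finset.mul_sum, Finset.sum_sub_distrib, Finset.sum_const, Finset.card_range,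
      nsmul_eq_mul]
    field_simp
    ring
  have h6 : (K:ℝ)⁻¹ * ∑ j ∈ Finset.range K, ((∫ ω, f (x j ω) ∂P) - f xstar)
      ≤ (K:ℝ)⁻¹ * (R₀ ^ 2 / γ) :=
    mul_le_mul_of_nonneg_left hSF (by positivity)
  have h7 : (K:ℝ)⁻¹ * (R₀ ^ 2 / γ) = R₀ ^ 2 / (γ * K) := by
    rw [mul_comm, ← div_eq_mul_inv, div_div]
  linarith [hJ]
end pull
end
end
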